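/- arXiv:2406.16340 — 7 statements merged into one kernel-verified Lean document; each statement's English description precedes it below -/
import Mathlib

section
/- Let H be an n×n complex Hermitian matrix and let λ be an eigenvalue of H of algebraic multiplicity 1. Then there exists a vector u : Fin n → ℂ with H.mulVec u = λ • u and ∑_i conj(u i)·(u i) = 1, such that for all i, j one has (adjugate(λ·1 − H)) i j = c · (u i) · conj(u j), where c = ∏_{μ} (λ − μ), the product running over the multiset of roots of the characteristic polynomial of H different from λ (counted with multiplicity; there are n − 1 of them). In particular adjugate(λ·1 − H) has rank one and all of its columns are pairwise parallel. -/
/-!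
Diagonalize `H = U D U*` with `U` unitary. Conjugation by `U` commutes with taking adjugates, and
since `λ` is a simple eigenvalue, exactly one diagonal entry `λ - d i₀` of `λ - D` vanishes, so
`adj (λ - D)` has the single nonzero entry `c = ∏_{k ≠ i₀} (λ - d k)`, at `(i₀, i₀)`. Hence
`adj (λ - H) = c u u*`, where `u` is the `i₀`-th column of `U`.
-/

open scoped ComplexConjugate

open Matrix Finset

theorem existsUnique_eq_of_count_map_univ_eq_one {ι α : Type*} [Fintype ι] [DecidableEq α]
    {f : ι → α} {a : α} (h : (univ.val.map f).count a = 1) : ∃! i, f i = a := by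
  classical
  rw [Multiset.count_map, ← Finset.filter_val, Finset.card_val] at h
  obtain ⟨i₀, hi₀⟩ := card_eq_one.mp h
  have key (i : ι) : f i = a ↔ i = i₀ := by simpa [eq_comm] using Finset.ext_iff.mp hi₀ i
  exact ⟨i₀, (key i₀).2 rfl, fun i => (key i).1⟩

theorem Multiset.prod_map_filter_ne_map_univ {ι α M : Type*} [Fintype ι] [DecidableEq ι]
    [DecidableEq α] [CommMonoid M] {f : ι → α} {a : α} {i₀ : ι} (hf : ∀ i, f i = a ↔ i = i₀)
    (g : α → M) :
    (((univ.val.map f).filter (· ≠ a)).map g).prod = ∏ i ∈ univ.erase i₀, g (f i) := by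
  rw [Multiset.filter_map, Multiset.map_map,
    Multiset.filter_congr (p := (· ≠ a) ∘ f) (q := (· ≠ i₀)) fun i _ => (hf i).not,
    ← filter_val, filter_ne', prod_eq_multiset_prod]
  rfl

namespace Matrix

section CommRing

variable {n R : Type*} [Fintype n] [DecidableEq n] [CommRing R]

theorem adjugate_eq_det_smul_of_mul_eq_one {P Q : Matrix n n R} (h : P * Q = 1) :
    adjugate P = P.det • Q :=
  calc adjugate P = adjugate P * (P * Q) := by rw [h, mul_one]
  _ = P.det • Q := by rw [← mul_assoc, adjugate_mul, smul_mul, one_mul]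

theorem adjugate_mul_mul_of_mul_eq_one {U V : Matrix n n R} (h : U * V = 1) (A : Matrix n n R) :
    adjugate (U * A * V) = U * adjugate A * V := by
  have h' : V * U = 1 := mul_eq_one_comm.mp h
  have hdet : V.det * U.det = 1 := by rw [← det_mul, h', det_one]
  rw [adjugate_mul_distrib, adjugate_mul_distrib, adjugate_eq_det_smul_of_mul_eq_one h,
    adjugate_eq_det_smul_of_mul_eq_one h', smul_mul, mul_smul_comm, mul_smul_comm, smul_smul, hdet,
    one_smul, ← mul_assoc]

theorem adjugate_diagonal_of_apply_eq_zero {d : n → R} {i₀ : n} (h : d i₀ = 0) :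
    adjugate (diagonal d) = diagonal (Pi.single i₀ (∏ j ∈ univ.erase i₀, d j)) := by
  rw [adjugate_diagonal]
  congr 1
  funext i
  rcases eq_or_ne i i₀ with rfl | hi
  · simp
  · rw [Pi.single_eq_of_ne hi]
    exact prod_eq_zero (mem_erase.mpr ⟨Ne.symm hi, mem_univ _⟩) h

theorem mul_diagonal_single_mul_apply (U V : Matrix n n R) (k : n) (c : R) (i j : n) :
    (U * diagonal (Pi.single k c) * V) i j = c * U i k * V k j := by
  rw [mul_apply]
  simp only [mul_diagonal, Pi.single_apply, mul_ite, ite_mul, mul_zero, zero_mul,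
    sum_ite_eq', mem_univ, if_true]
  ring

end CommRing

theorem rank_vecMulVec_eq_one {K m n : Type*} [Field K] [Fintype n] {w : m → K} {v : n → K}
    (hw : w ≠ 0) (hv : v ≠ 0) :
    (vecMulVec w v).rank = 1 := by
  refine le_antisymm (rank_vecMulVec_le w v) (Nat.one_le_iff_ne_zero.mpr fun h0 => ?_)
  classical
  obtain ⟨i, hi⟩ := Function.ne_iff.mp hw
  obtain ⟨j, hj⟩ := Function.ne_iff.mp hv
  rw [rank, Submodule.finrank_eq_zero, LinearMap.range_eq_bot] at h0
  have := congr($h0 (Pi.single j 1) i)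
  simp only [mulVecBilin_apply, mulVec_single, MulOpposite.op_one, Pi.smul_apply, col_apply,
    one_smul, LinearMap.zero_apply, Pi.zero_apply] at this
  exact mul_ne_zero hi hj this

end Matrix

namespace Matrix.IsHermitian

variable {𝕜 n : Type*} [RCLike 𝕜] [Fintype n] [DecidableEq n] {A : Matrix n n 𝕜}

theorem smul_one_sub_eq_conj_diagonal (hA : A.IsHermitian) (r : 𝕜) :
    r • 1 - A = (hA.eigenvectorUnitary : Matrix n n 𝕜) *
      diagonal (fun i => r - hA.eigenvalues i) * star (hA.eigenvectorUnitary : Matrix n n 𝕜) := by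
  have hdiag : diagonal (fun i => r - (hA.eigenvalues i : 𝕜))
      = r • 1 - diagonal (RCLike.ofReal ∘ hA.eigenvalues) := by
    rw [smul_one_eq_diagonal, diagonal_sub]
    rfl
  conv_lhs => rw [hA.spectral_theorem, Unitary.conjStarAlgAut_apply]
  rw [hdiag, mul_sub, sub_mul, mul_smul_one, smul_mul,
    Unitary.mul_star_self_of_mem hA.eigenvectorUnitary.2]

theorem adjugate_smul_one_sub_apply_of_eigenvalues_eq (hA : A.IsHermitian) {r : 𝕜} {i₀ : n}
    (h : (hA.eigenvalues i₀ : 𝕜) = r) (i j : n) :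
    (r • 1 - A).adjugate i j = (∏ k ∈ univ.erase i₀, (r - hA.eigenvalues k)) *
      ⇑(hA.eigenvectorBasis i₀) i * conj (⇑(hA.eigenvectorBasis i₀) j) := by
  rw [hA.smul_one_sub_eq_conj_diagonal,
    adjugate_mul_mul_of_mul_eq_one (Unitary.coe_mul_star_self _),
    adjugate_diagonal_of_apply_eq_zero (i₀ := i₀) (by simp [h]), mul_diagonal_single_mul_apply]
  rfl

theorem sum_conj_mul_eigenvectorBasis_self (hA : A.IsHermitian) (i₀ : n) :
    ∑ i, conj (⇑(hA.eigenvectorBasis i₀) i) * ⇑(hA.eigenvectorBasis i₀) i = 1 := by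
  simpa [mul_apply] using congr_fun₂ (Unitary.coe_star_mul_self hA.eigenvectorUnitary) i₀ i₀

end Matrix.IsHermitian

/-- Let `H` be an `n×n` complex Hermitian matrix and let `λ` be an eigenvalue of `H`
of algebraic multiplicity 1.  Then there is a unit eigenvector `u` of `H` for `λ`
such that `adjugate (λ•1 - H) i j = c * u i * conj (u j)`, where
`c = ∏ (λ - μ)` over the multiset of roots `μ ≠ λ` of the characteristic polynomial
(counted with multiplicity).  In particular the adjugate has rank one and all of its
columns are pairwise parallel. -/
theorem adjugate_charmatrix_rank_one {n : ℕ} (H : Matrix (Fin n) (Fin n) ℂ)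
    (hH : H.IsHermitian) (lam : ℂ)
    (hmul : Polynomial.rootMultiplicity lam (Matrix.charpoly H) = 1) :
    (∃ u : Fin n → ℂ,
        H.mulVec u = lam • u ∧
        (∑ i, conj (u i) * u i) = 1 ∧
        ∀ i j : Fin n,
          (lam • (1 : Matrix (Fin n) (Fin n) ℂ) - H).adjugate i j
            = ((((Matrix.charpoly H).roots.filter (fun μ => μ ≠ lam)).map
                (fun μ => lam - μ)).prod) * u i * conj (u j)) ∧
      ((lam • (1 : Matrix (Fin n) (Fin n) ℂ) - H).adjugate).rank = 1 ∧
      ∀ j k i i' : Fin n,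
        (lam • (1 : Matrix (Fin n) (Fin n) ℂ) - H).adjugate i j *
            (lam • (1 : Matrix (Fin n) (Fin n) ℂ) - H).adjugate i' k
          = (lam • (1 : Matrix (Fin n) (Fin n) ℂ) - H).adjugate i' j *
            (lam • (1 : Matrix (Fin n) (Fin n) ℂ) - H).adjugate i k := by
  obtain ⟨i₀, hi₀, huniq⟩ := existsUnique_eq_of_count_map_univ_eq_one
    (f := RCLike.ofReal ∘ hH.eigenvalues) (a := lam)
    (by rw [← hH.roots_charpoly_eq_eigenvalues, Polynomial.count_roots, hmul])
  have hc : (((Matrix.charpoly H).roots.filter (fun μ => μ ≠ lam)).map (fun μ => lam - μ)).prod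
      = ∏ k ∈ univ.erase i₀, (lam - hH.eigenvalues k) := by
    rw [hH.roots_charpoly_eq_eigenvalues,
      Multiset.prod_map_filter_ne_map_univ fun i => ⟨huniq i, fun h => h ▸ hi₀⟩]
    rfl
  set u := ⇑(hH.eigenvectorBasis i₀)
  set c := (((Matrix.charpoly H).roots.filter (fun μ => μ ≠ lam)).map (fun μ => lam - μ)).prod
  have hentry (i j : Fin n) : (lam • (1 : Matrix (Fin n) (Fin n) ℂ) - H).adjugate i j
      = c * u i * conj (u j) := by
    rw [hc]
    exact hH.adjugate_smul_one_sub_apply_of_eigenvalues_eq hi₀ i j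
  have hc0 : c ≠ 0 := by
    rw [hc, prod_ne_zero_iff]
    exact fun k hk => sub_ne_zero.mpr fun h => ne_of_mem_erase hk (huniq k h.symm)
  have hnorm : ∑ i, conj (u i) * u i = 1 := hH.sum_conj_mul_eigenvectorBasis_self i₀
  have hu0 : u ≠ 0 := fun h => by simp [h] at hnorm
  refine ⟨⟨u, ?_, hnorm, hentry⟩, ?_, fun j k i i' => by simp only [hentry]; ring⟩
  · rw [hH.mulVec_eigenvectorBasis, ← hi₀, RCLike.real_smul_eq_coe_smul (K := ℂ)]
    rfl
  · have hvec : (lam • (1 : Matrix (Fin n) (Fin n) ℂ) - H).adjugate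
        = vecMulVec (c • u) (star u) := by
      ext i j
      rw [hentry, vecMulVec_apply, Pi.smul_apply, Pi.star_apply, smul_eq_mul, RCLike.star_def]
    rw [hvec]
    exact rank_vecMulVec_eq_one (smul_ne_zero hc0 hu0) (star_ne_zero.mpr hu0)
end

section
/- Let H be an n×n complex Hermitian matrix, let λ be an eigenvalue of H of algebraic multiplicity s ≥ 1, and let D = D_s(λ·1 − H) be the reduced order-one complement of order s of the characteristic matrix, i.e. the matrix whose (i,j) entry is the coefficient of z^(n−s) in the (i,j) entry of adjugate(1 + z·(λ·1 − H)) over ℂ[z]. Then D ≠ 0 and H * D = λ • D; in particular every nonzero column of D is an eigenvector of H associated with λ. -/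
/-- The reduced order-one complement of order `s` of an `n×n` matrix `A`:
the matrix whose `(i,j)` entry is the coefficient of `z^(n-s)` in the `(i,j)` entry
of `adjugate (1 + z • A)`, computed over the polynomial ring `R[z]`. -/
noncomputable def redComp {R : Type*} [CommRing R] {n : ℕ} (s : ℕ)
    (A : Matrix (Fin n) (Fin n) R) : Matrix (Fin n) (Fin n) R :=
  Matrix.of fun i j =>
    (((1 + (Polynomial.X : Polynomial R) • A.map (fun a => Polynomial.C a) :
        Matrix (Fin n) (Fin n) (Polynomial R)).adjugate) i j).coeff (n - s)

/-!
Diagonalize `H = U diag(d) U*` with `U` unitary. The adjugate, hence `redComp`, commutes with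
conjugation by `U`, so `redComp s (λ - H) = U diag(e) U*`, where `e k` is the coefficient of
`z^(n-s)` in `∏_{j ≠ k} (1 + z (λ - d j))`. Exactly `s` of the numbers `λ - d j` vanish, so this
product has degree `< n - s` unless `d k = λ`, and then its top coefficient is the product `c ≠ 0`
of the nonvanishing `λ - d j`. Hence `redComp s (λ - H) = c • U diag(𝟙[d = λ]) U*` is `c` times
the orthogonal projection onto the `λ`-eigenspace: nonzero since `s ≥ 1`, and killed by `λ - H`.
-/

open Polynomial Matrix Finset

theorem Matrix.adjugate_conj_of_mul_eq_one {R m : Type*} [CommRing R] [Fintype m]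
    [DecidableEq m] {P Q : Matrix m m R} (hPQ : P * Q = 1) (B : Matrix m m R) :
    adjugate (P * B * Q) = P * adjugate B * Q := by
  have hQP : Q * P = 1 := mul_eq_one_comm.mp hPQ
  have hdet : Q.det * P.det = 1 := by rw [← det_mul, hQP, det_one]
  have hadjP : adjugate P = P.det • Q := by
    simpa [← Matrix.mul_assoc, hQP] using congrArg (Q * ·) (mul_adjugate P)
  have hadjQ : adjugate Q = Q.det • P := by
    simpa [← Matrix.mul_assoc, hPQ] using congrArg (P * ·) (mul_adjugate Q)
  rw [adjugate_mul_distrib, adjugate_mul_distrib, hadjP, hadjQ]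
  simp only [Matrix.mul_smul, Matrix.smul_mul, smul_smul, mul_comm P.det, hdet, one_smul,
    Matrix.mul_assoc]

section RedComp

variable {R : Type*} [CommRing R] {n : ℕ}

theorem redComp_eq_coeff_matPolyEquiv (s : ℕ) (A : Matrix (Fin n) (Fin n) R) :
    redComp s A = (matPolyEquiv (1 + (X : R[X]) • A.map C).adjugate).coeff (n - s) := by
  ext i j
  rw [matPolyEquiv_coeff_apply]
  rfl

theorem redComp_conj {P Q : Matrix (Fin n) (Fin n) R} (hPQ : P * Q = 1) (s : ℕ)
    (A : Matrix (Fin n) (Fin n) R) :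
    redComp s (P * A * Q) = P * redComp s A * Q := by
  have hPQC : P.map C * Q.map C = (1 : Matrix (Fin n) (Fin n) R[X]) := by
    rw [← Matrix.map_mul, hPQ, Matrix.map_one _ (map_zero C) (map_one C)]
  have hconj : 1 + (X : R[X]) • (P * A * Q).map C =
      P.map C * (1 + (X : R[X]) • A.map C) * Q.map C := by
    rw [Matrix.map_mul, Matrix.map_mul, Matrix.mul_add, Matrix.add_mul, Matrix.mul_one, hPQC,
      Matrix.mul_smul, Matrix.smul_mul]
  rw [redComp_eq_coeff_matPolyEquiv, redComp_eq_coeff_matPolyEquiv, hconj,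
    adjugate_conj_of_mul_eq_one hPQC, map_mul, map_mul, matPolyEquiv_map_C, matPolyEquiv_map_C,
    coeff_mul_C, coeff_C_mul]

theorem redComp_diagonal (s : ℕ) (μ : Fin n → R) :
    redComp s (diagonal μ) =
      diagonal fun k => (∏ j ∈ univ.erase k, (1 + X * C (μ j))).coeff (n - s) := by
  have h : 1 + (X : R[X]) • (diagonal μ).map C = diagonal fun j => 1 + X * C (μ j) := by
    rw [diagonal_map (map_zero C), ← diagonal_smul, ← diagonal_one, diagonal_add]
    rfl
  ext i j
  simp only [redComp, of_apply, h, adjugate_diagonal]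
  rcases eq_or_ne i j with rfl | hij
  · simp
  · simp [hij]

end RedComp

namespace Polynomial

variable {ι R : Type*} [CommRing R]

theorem natDegree_prod_one_add_X_mul_C_le (T : Finset ι) (μ : ι → R) :
    (∏ j ∈ T, (1 + X * C (μ j))).natDegree ≤ #T :=
  (natDegree_prod_le _ _).trans <| (sum_le_card_nsmul T _ 1 fun j _ => by compute_degree).trans_eq
    (smul_eq_mul _ _ |>.trans (mul_one #T))

theorem coeff_card_prod_one_add_X_mul_C (T : Finset ι) (μ : ι → R) :
    (∏ j ∈ T, (1 + X * C (μ j))).coeff #T = ∏ j ∈ T, μ j := by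
  have h := coeff_prod_of_natDegree_le (s := T) (fun j => 1 + X * C (μ j)) 1
    fun j _ => by compute_degree
  rw [mul_one] at h
  rw [h]
  exact prod_congr rfl fun j _ => by simp [coeff_one]

theorem prod_filter_ne_zero_one_add_X_mul_C [DecidableEq R] (T : Finset ι) (μ : ι → R) :
    ∏ j ∈ T with μ j ≠ 0, (1 + X * C (μ j)) = ∏ j ∈ T, (1 + X * C (μ j)) :=
  prod_filter_of_ne fun j _ hj => by contrapose! hj; simp [hj]

theorem coeff_prod_erase_one_add_X_mul_C [Fintype ι] [DecidableEq ι] [DecidableEq R]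
    (μ : ι → R) (k : ι) :
    (∏ j ∈ univ.erase k, (1 + X * C (μ j))).coeff #{j | μ j ≠ 0} =
      if μ k = 0 then ∏ j with μ j ≠ 0, μ j else 0 := by
  rw [← prod_filter_ne_zero_one_add_X_mul_C, filter_erase]
  split_ifs with hk
  · rw [erase_eq_of_notMem (by simp [hk]), coeff_card_prod_one_add_X_mul_C]
  · refine coeff_eq_zero_of_natDegree_lt ((natDegree_prod_one_add_X_mul_C_le _ _).trans_lt ?_)
    exact card_erase_lt_of_mem (by simp [hk])

end Polynomial

section Diagonal

variable {R : Type*} [CommRing R] [DecidableEq R] {n s : ℕ} (μ : Fin n → R)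

theorem redComp_diagonal_of_card_zeros (hs : #{j | μ j = 0} = s) :
    redComp s (diagonal μ) = diagonal fun k => if μ k = 0 then ∏ j with μ j ≠ 0, μ j else 0 := by
  have hcard : n - s = #{j | μ j ≠ 0} := by
    have h := card_filter_add_card_filter_not (s := univ) fun j => μ j = 0
    rw [card_univ, Fintype.card_fin] at h
    rw [← hs]
    exact Nat.sub_eq_of_eq_add' h.symm
  rw [redComp_diagonal, hcard]
  simp_rw [coeff_prod_erase_one_add_X_mul_C]

theorem diagonal_mul_redComp_diagonal (hs : #{j | μ j = 0} = s) :
    diagonal μ * redComp s (diagonal μ) = 0 := by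
  rw [redComp_diagonal_of_card_zeros μ hs, diagonal_mul_diagonal, ← diagonal_zero]
  congr 1
  ext k
  split_ifs with hk <;> simp [hk]

theorem redComp_diagonal_ne_zero [IsDomain R] (hs : #{j | μ j = 0} = s) (hpos : 0 < s) :
    redComp s (diagonal μ) ≠ 0 := by
  obtain ⟨k, hk⟩ := card_pos.mp (hs ▸ hpos : 0 < #{j | μ j = 0})
  rw [mem_filter] at hk
  rw [redComp_diagonal_of_card_zeros μ hs]
  intro h
  have hkk := congr_fun (congr_fun h k) k
  rw [diagonal_apply_eq, if_pos hk.2] at hkk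
  exact prod_ne_zero_iff.mpr (fun j hj => (mem_filter.mp hj).2) hkk

end Diagonal

theorem Matrix.IsHermitian.rootMultiplicity_charpoly {𝕜 m : Type*} [RCLike 𝕜] [Fintype m]
    [DecidableEq m] [DecidableEq 𝕜] {H : Matrix m m 𝕜} (hH : H.IsHermitian) (a : 𝕜) :
    rootMultiplicity a H.charpoly = #{i | (hH.eigenvalues i : 𝕜) = a} := by
  rw [← count_roots, hH.roots_charpoly_eq_eigenvalues, Multiset.count_map]
  simp_rw [eq_comm (a := a)]
  rfl

theorem Matrix.hasEigenvector_mulVecLin_of_mul_eq_smul {R m : Type*} [CommRing R] [Fintype m]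
    {H D : Matrix m m R} {a : R} (h : H * D = a • D) (j : m) (hj : (fun i => D i j) ≠ 0) :
    Module.End.HasEigenvector (mulVecLin H) a (fun i => D i j) := by
  refine Module.End.hasEigenvector_iff.mpr ⟨Module.End.mem_eigenspace_iff.mpr ?_, hj⟩
  ext i
  simpa [mul_apply, mulVec, dotProduct] using congr_fun (congr_fun h i) j

/-- Let `H` be an `n×n` complex Hermitian matrix and `λ` an eigenvalue of `H` of
algebraic multiplicity `s ≥ 1`, and let `D = redComp s (λ•1 - H)` be the reduced
order-one complement of order `s` of the characteristic matrix.  Then `D ≠ 0` and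
`H * D = λ • D`; in particular every nonzero column of `D` is an eigenvector of `H`
associated with `λ`. -/
theorem redComp_charmatrix_eigenvector {n : ℕ} (H : Matrix (Fin n) (Fin n) ℂ)
    (hH : H.IsHermitian) (lam : ℂ) (s : ℕ) (hs : 1 ≤ s)
    (hmul : Polynomial.rootMultiplicity lam (Matrix.charpoly H) = s) :
    redComp s (lam • (1 : Matrix (Fin n) (Fin n) ℂ) - H) ≠ 0 ∧
      H * redComp s (lam • (1 : Matrix (Fin n) (Fin n) ℂ) - H)
        = lam • redComp s (lam • (1 : Matrix (Fin n) (Fin n) ℂ) - H) ∧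
      ∀ j : Fin n,
        (fun i => redComp s (lam • (1 : Matrix (Fin n) (Fin n) ℂ) - H) i j) ≠ 0 →
          Module.End.HasEigenvector (Matrix.mulVecLin H) lam
            (fun i => redComp s (lam • (1 : Matrix (Fin n) (Fin n) ℂ) - H) i j) := by
  set U := hH.eigenvectorUnitary
  set φ := Unitary.conjStarAlgAut ℂ (Matrix (Fin n) (Fin n) ℂ) U
  set μ : Fin n → ℂ := fun i => lam - RCLike.ofReal (hH.eigenvalues i)
  have hA : lam • 1 - H = φ (diagonal μ) := by
    have hμ : diagonal μ = lam • 1 - diagonal (RCLike.ofReal ∘ hH.eigenvalues) := by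
      rw [smul_one_eq_diagonal, diagonal_sub]
      rfl
    rw [hμ, map_sub, map_smul, map_one, ← hH.spectral_theorem]
  have hzeros : #{i | μ i = 0} = s := by
    simp_rw [μ, sub_eq_zero, eq_comm (a := lam), ← hmul, hH.rootMultiplicity_charpoly]
  have hD : redComp s (lam • 1 - H) = φ (redComp s (diagonal μ)) := by
    rw [hA, Unitary.conjStarAlgAut_apply, Unitary.conjStarAlgAut_apply,
      redComp_conj (Unitary.mul_star_self_of_mem U.2)]
  have hHD : H * redComp s (lam • 1 - H) = lam • redComp s (lam • 1 - H) := by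
    have hAD : (lam • 1 - H) * redComp s (lam • 1 - H) = 0 := by
      rw [hD, hA, ← map_mul, diagonal_mul_redComp_diagonal μ hzeros, map_zero]
    rw [sub_mul, smul_mul, Matrix.one_mul, sub_eq_zero] at hAD
    exact hAD.symm
  refine ⟨?_, hHD, hasEigenvector_mulVecLin_of_mul_eq_smul hHD⟩
  rw [hD]
  exact (map_ne_zero_iff φ φ.injective).mpr (redComp_diagonal_ne_zero μ hzeros hs)
end

section
/- Let A be an n×n complex matrix and let 0 ≤ s ≤ n. Then the reduced order-one complement of order s of A is given by the trace expansion D_s(A) = (−1)^(n−s) · ∑_{r=0}^{n−s} c_{n−s−r} • A^r, where for m ≥ 0 the scalar c_m is the sum, over all tuples (k_1, …, k_m) of non-negative integers satisfying ∑_{l=1}^{m} l·k_l = m, of the products ∏_{l=1}^{m} (−1)^(k_l) / (k_l! · l^(k_l)) · (Tr(A^l))^(k_l) (with c_0 = 1, the empty product). -/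
/-- The trace coefficient `c_m`: the sum, over all tuples `(k_1, …, k_m)` of
non-negative integers with `∑ l·k_l = m` (each `k_l ≤ m` is then automatic), of
`∏_{l=1}^{m} (−1)^(k_l) / (k_l! · l^(k_l)) · (Tr(A^l))^(k_l)`.  Here `c_0 = 1`. -/
noncomputable def traceCoeff {n : ℕ} (A : Matrix (Fin n) (Fin n) ℂ) (m : ℕ) : ℂ :=
  ∑ k ∈ (Fintype.piFinset fun _ : Fin m => Finset.range (m + 1)).filter
      (fun k : Fin m → ℕ => (∑ l : Fin m, (l.1 + 1) * k l) = m),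
    ∏ l : Fin m,
      (-1 : ℂ) ^ (k l) / ((Nat.factorial (k l) : ℂ) * ((l.1 + 1 : ℕ) : ℂ) ^ (k l))
        * (Matrix.trace (A ^ (l.1 + 1))) ^ (k l)

/-! Write `det (1 + z A) = ∑ e_m z ^ m`. Comparing coefficients in
`(1 + z A) * adjugate (1 + z A) = det (1 + z A)` gives `D_s(A) = ∑_r (-1) ^ r e_{n-s-r} A ^ r`.
Jacobi's formula `d/dz det (1 + z A) = Tr (adjugate (1 + z A) * A)` then yields Newton's identities
`(t + 1) e_{t+1} = ∑_r (-1) ^ r e_{t-r} Tr (A ^ (r + 1))`. The coefficients `c_m` of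
`exp (-∑_l Tr (A ^ l) z ^ l / l)` satisfy the same recursion up to the sign `(-1) ^ m`, so
`c_m = (-1) ^ m e_m`. -/

open Finset Polynomial Matrix

lemma neg_one_pow_sub_eq_pow_add {R : Type*} [Monoid R] [HasDistribNeg R] {m n : ℕ} (h : m ≤ n) :
    (-1 : R) ^ (n - m) = (-1) ^ (n + m) := by
  rw [show n + m = n - m + 2 * m by omega, pow_add, pow_mul, neg_one_sq, one_pow, mul_one]

section ExpCoeff

def tupleWeight {N : ℕ} (k : Fin N → ℕ) : ℕ := ∑ l : Fin N, (l.1 + 1) * k l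

lemma mul_le_tupleWeight {N : ℕ} (k : Fin N → ℕ) (l : Fin N) : (l.1 + 1) * k l ≤ tupleWeight k :=
  single_le_sum (f := fun l : Fin N => (l.1 + 1) * k l) (fun _ _ => Nat.zero_le _) (mem_univ l)

lemma tupleWeight_add_single {N : ℕ} (k : Fin N → ℕ) (l : Fin N) :
    tupleWeight (k + Pi.single l 1) = tupleWeight k + (l.1 + 1) := by
  simp [tupleWeight, mul_add, sum_add_distrib, Pi.single_apply]

lemma tupleWeight_snoc_zero {N : ℕ} (k : Fin N → ℕ) :
    tupleWeight (Fin.snoc k 0 : Fin (N + 1) → ℕ) = tupleWeight k := by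
  simp [tupleWeight, Fin.sum_univ_castSucc]

def weightedTuples (N m : ℕ) : Finset (Fin N → ℕ) :=
  (Fintype.piFinset fun _ : Fin N => range (m + 1)).filter (fun k => tupleWeight k = m)

lemma mem_weightedTuples {N m : ℕ} {k : Fin N → ℕ} :
    k ∈ weightedTuples N m ↔ tupleWeight k = m := by
  simp only [weightedTuples, mem_filter, Fintype.mem_piFinset, mem_range, and_iff_right_iff_imp]
  rintro rfl l
  exact Nat.lt_succ_of_le ((Nat.le_mul_of_pos_left _ l.1.succ_pos).trans (mul_le_tupleWeight k l))

variable {K : Type*} [Field K] (p : ℕ → K)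

/- `expCoeff p N m` is the coefficient of `z ^ m` in `∏_{l=1}^{N} exp (-p l * z ^ l / l)`, whose
`l`-th factor is `∑_j expTerm p l j * z ^ (l * j)`; `traceCoeff A m` unfolds to
`expCoeff (fun l => trace (A ^ l)) m m`. -/
def expTerm (l j : ℕ) : K := (-1) ^ j / ((j.factorial : K) * (l : K) ^ j) * p l ^ j

def expCoeff (N m : ℕ) : K := ∑ k ∈ weightedTuples N m, ∏ l : Fin N, expTerm p (l.1 + 1) (k l)

lemma expTerm_zero (l : ℕ) : expTerm p l 0 = 1 := by
  simp [expTerm]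

lemma expTerm_succ [CharZero K] {l : ℕ} (hl : l ≠ 0) (j : ℕ) :
    (l * (j + 1) : K) * expTerm p l (j + 1) = -p l * expTerm p l j := by
  have : (l : K) ≠ 0 := Nat.cast_ne_zero.mpr hl
  simp only [expTerm, pow_succ, Nat.factorial_succ]
  push_cast
  field_simp

lemma expCoeff_zero : expCoeff p 0 0 = 1 := by
  simp [expCoeff, weightedTuples, tupleWeight]

lemma expCoeff_succ_of_le {N m : ℕ} (h : m ≤ N) : expCoeff p (N + 1) m = expCoeff p N m := by
  refine (sum_of_injOn (fun k => Fin.snoc k 0) ?_ ?_ ?_ ?_).symm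
  · intro k _ k' _ hkk'
    simpa using congrArg Fin.init hkk'
  · intro k hk
    simpa [mem_weightedTuples, tupleWeight_snoc_zero] using hk
  · intro k hk hnot
    rw [mem_weightedTuples] at hk
    have hlast : k (Fin.last N) = 0 := by
      have := mul_le_tupleWeight k (Fin.last N)
      simp only [Fin.val_last] at this
      nlinarith
    refine absurd ⟨Fin.init k, ?_, ?_⟩ hnot
    · rw [mem_coe, mem_weightedTuples, ← hk, ← tupleWeight_snoc_zero, ← hlast, Fin.snoc_init_self]
    · simp only [← hlast, Fin.snoc_init_self]
  · intro k _
    simp [Fin.prod_univ_castSucc, expTerm_zero]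

lemma expCoeff_of_le {N m : ℕ} (h : m ≤ N) : expCoeff p N m = expCoeff p m m := by
  induction N, h using Nat.le_induction with
  | base => rfl
  | succ N hN ih => rw [expCoeff_succ_of_le p hN, ih]

lemma sum_mul_prod_expTerm_eq_neg_mul_expCoeff [CharZero K] {N m : ℕ} (l : Fin N)
    (hl : l.1 + 1 ≤ m) :
    ∑ k ∈ weightedTuples N m, (((l.1 + 1) * k l : ℕ) : K) * ∏ j : Fin N, expTerm p (j.1 + 1) (k j)
      = -p (l.1 + 1) * expCoeff p N (m - (l.1 + 1)) := by
  rw [expCoeff, mul_sum]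
  refine (sum_of_injOn (· + Pi.single l 1) ?_ ?_ ?_ ?_).symm
  · intro k _ k' _ hkk'
    exact add_right_cancel hkk'
  · intro k hk
    simp only [mem_coe, mem_weightedTuples, tupleWeight_add_single] at hk ⊢
    omega
  · intro k hkm hnot
    suffices k l = 0 by simp [this]
    by_contra hkl
    apply hnot
    have hk : k - Pi.single l 1 + Pi.single l 1 = k := by
      ext j
      by_cases hj : j = l
      · subst hj; simp; omega
      · simp [hj]
    refine ⟨k - Pi.single l 1, ?_, hk⟩
    have := tupleWeight_add_single (k - Pi.single l 1) l
    rw [hk, mem_weightedTuples.mp hkm] at this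
    rw [mem_coe, mem_weightedTuples]
    omega
  · intro k _
    have hrest : ∏ j ∈ {l}ᶜ, expTerm p (j.1 + 1) ((k + Pi.single l 1 : Fin N → ℕ) j)
        = ∏ j ∈ {l}ᶜ, expTerm p (j.1 + 1) (k j) :=
      prod_congr rfl fun j hj => by simp [(by simpa using hj : j ≠ l)]
    rw [Fintype.prod_eq_mul_prod_compl l, Fintype.prod_eq_mul_prod_compl l, hrest, ← mul_assoc,
      ← mul_assoc, Pi.add_apply, Pi.single_eq_same, Nat.cast_mul]
    have hstep := expTerm_succ p (l := l.1 + 1) l.1.succ_ne_zero (k l)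
    push_cast at hstep ⊢
    rw [hstep]

lemma succ_mul_expCoeff [CharZero K] (t : ℕ) :
    ((t : K) + 1) * expCoeff p (t + 1) (t + 1)
      = -∑ r ∈ range (t + 1), p (r + 1) * expCoeff p (t - r) (t - r) := by
  calc ((t : K) + 1) * expCoeff p (t + 1) (t + 1)
      = ∑ k ∈ weightedTuples (t + 1) (t + 1),
          (tupleWeight k : K) * ∏ j : Fin (t + 1), expTerm p (j.1 + 1) (k j) := by
        rw [expCoeff, mul_sum]
        refine sum_congr rfl fun k hk => ?_
        rw [mem_weightedTuples.mp hk, Nat.cast_succ]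
    _ = ∑ l : Fin (t + 1), ∑ k ∈ weightedTuples (t + 1) (t + 1),
          (((l.1 + 1) * k l : ℕ) : K) * ∏ j : Fin (t + 1), expTerm p (j.1 + 1) (k j) := by
        simp only [tupleWeight, Nat.cast_sum, sum_mul]
        exact sum_comm
    _ = ∑ l : Fin (t + 1), -(p (l.1 + 1) * expCoeff p (t - l) (t - l)) := by
        refine sum_congr rfl fun l _ => ?_
        rw [sum_mul_prod_expTerm_eq_neg_mul_expCoeff p l l.2, expCoeff_of_le p (by omega),
          show t + 1 - (l.1 + 1) = t - l by omega, neg_mul]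
    _ = _ := by
        rw [Fin.sum_univ_eq_sum_range (fun l => -(p (l + 1) * expCoeff p (t - l) (t - l))),
          sum_neg_distrib]

lemma expCoeff_eq_of_succ_mul [CharZero K] (a : ℕ → K) (h0 : a 0 = 1)
    (hsucc : ∀ t : ℕ, ((t : K) + 1) * a (t + 1) = -∑ r ∈ range (t + 1), p (r + 1) * a (t - r))
    (m : ℕ) : expCoeff p m m = a m := by
  induction m using Nat.strong_induction_on with
  | _ m ih =>
    cases m with
    | zero => rw [expCoeff_zero, h0]
    | succ t =>
      apply mul_left_cancel₀ (Nat.cast_add_one_ne_zero t)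
      rw [succ_mul_expCoeff, hsucc]
      congr 1
      exact sum_congr rfl fun r hr => by rw [ih _ (by rw [mem_range] at hr; omega)]

end ExpCoeff

theorem Matrix.derivative_det {R n : Type*} [CommRing R] [Fintype n] [DecidableEq n]
    (M : Matrix n n R[X]) :
    derivative M.det = trace (adjugate M * M.map derivative) := by
  have hdiag : ∀ i, (adjugate M * M.map derivative) i i
      = (M.updateCol i fun k => derivative (M k i)).det := fun i => by
    rw [← cramer_apply, cramer_eq_adjugate_mulVec]
    rfl
  simp only [trace, diag_apply, hdiag, det_apply, Units.smul_def, map_sum, map_zsmul,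
    derivative_prod_finset, smul_sum]
  rw [sum_comm]
  refine sum_congr rfl fun i _ => sum_congr rfl fun σ _ => ?_
  rw [← mul_prod_erase univ _ (mem_univ i), updateCol_self, mul_comm]
  congr 2
  exact prod_congr rfl fun j hj => (updateCol_ne (ne_of_mem_erase hj)).symm

/- `Q = E * (1 + X * C a)⁻¹ = E * ∑ (-X * C a) ^ r`, read off coefficientwise. -/
lemma coeff_eq_sum_of_one_add_X_mul_C_mul_eq {R S : Type*} [CommRing R] [Ring S] [Algebra R S]
    {a : S} {Q : S[X]} {E : R[X]} (h : (1 + X * C a) * Q = E.map (algebraMap R S)) (t : ℕ) :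
    Q.coeff t = ∑ r ∈ range (t + 1), ((-1) ^ r * E.coeff (t - r)) • a ^ r := by
  have hcoeff : ∀ t, ((1 + X * C a) * Q).coeff t = algebraMap R S (E.coeff t) := fun t => by
    rw [h, coeff_map]
  induction t with
  | zero =>
    simpa [add_mul, mul_assoc, Algebra.algebraMap_eq_smul_one] using hcoeff 0
  | succ t ih =>
    have hrec : Q.coeff (t + 1) = algebraMap R S (E.coeff (t + 1)) - a * Q.coeff t := by
      rw [← hcoeff, add_mul, one_mul, mul_assoc, coeff_add, coeff_X_mul, coeff_C_mul,
        add_sub_cancel_right]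
    rw [hrec, ih, sum_range_succ' (fun r => ((-1) ^ r * E.coeff (t + 1 - r)) • a ^ r), mul_sum,
      Algebra.algebraMap_eq_smul_one, sub_eq_neg_add, ← sum_neg_distrib]
    simp only [pow_zero, one_mul, Nat.sub_zero, Nat.add_sub_add_right]
    congr 1
    refine sum_congr rfl fun r _ => ?_
    rw [mul_smul_comm, ← pow_succ', ← neg_smul, pow_succ (-1 : R), mul_neg_one, neg_mul]

lemma map_derivative_one_add_X_smul {R n : Type*} [CommRing R] [DecidableEq n] (A : Matrix n n R) :
    (1 + (X : R[X]) • A.map C).map derivative = A.map C := by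
  ext i j
  by_cases hij : i = j <;> simp [one_apply, hij]

section OneAddXSmul

variable {R : Type*} [CommRing R] {n : Type*} [Fintype n] [DecidableEq n] (A : Matrix n n R)

noncomputable def adjugateOneAddXSmul : (Matrix n n R)[X] :=
  matPolyEquiv (adjugate (1 + (X : R[X]) • A.map C))

lemma matPolyEquiv_one_add_X_smul : matPolyEquiv (1 + (X : R[X]) • A.map C) = 1 + X * C A := by
  simp

lemma coeff_adjugateOneAddXSmul (t : ℕ) :
    (adjugateOneAddXSmul A).coeff t
      = ∑ r ∈ range (t + 1),
          ((-1) ^ r * (det (1 + (X : R[X]) • A.map C)).coeff (t - r)) • A ^ r := by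
  refine coeff_eq_sum_of_one_add_X_mul_C_mul_eq ?_ t
  rw [adjugateOneAddXSmul, ← matPolyEquiv_one_add_X_smul, ← map_mul, mul_adjugate,
    matPolyEquiv_smul_one]

lemma coeff_zero_det_one_add_X_smul : (det (1 + (X : R[X]) • A.map C)).coeff 0 = 1 := by
  rw [coeff_zero_eq_eval_zero, eval_det_add_X_smul, det_one, eval_one]

lemma trace_coeff_matPolyEquiv (M : Matrix n n R[X]) (t : ℕ) :
    trace ((matPolyEquiv M).coeff t) = (trace M).coeff t := by
  simp [trace]

theorem succ_mul_coeff_det_one_add_X_smul (t : ℕ) :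
    ((t : R) + 1) * (det (1 + (X : R[X]) • A.map C)).coeff (t + 1)
      = ∑ r ∈ range (t + 1),
          (-1) ^ r * (det (1 + (X : R[X]) • A.map C)).coeff (t - r) * trace (A ^ (r + 1)) := by
  have h := congrArg (coeff · t) (derivative_det (1 + (X : R[X]) • A.map C))
  simp only [coeff_derivative, map_derivative_one_add_X_smul] at h
  rw [mul_comm, h, ← trace_coeff_matPolyEquiv, map_mul, matPolyEquiv_map_C, coeff_mul_C,
    ← adjugateOneAddXSmul, coeff_adjugateOneAddXSmul, sum_mul, trace_sum]
  simp only [smul_mul_assoc, ← pow_succ, trace_smul, smul_eq_mul]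

end OneAddXSmul

lemma redComp_eq_coeff_adjugateOneAddXSmul {R : Type*} [CommRing R] {n : ℕ} (s : ℕ)
    (A : Matrix (Fin n) (Fin n) R) : redComp s A = (adjugateOneAddXSmul A).coeff (n - s) := by
  ext i j
  simp [redComp, adjugateOneAddXSmul]

theorem traceCoeff_eq_neg_one_pow_mul_coeff_det {n : ℕ} (A : Matrix (Fin n) (Fin n) ℂ) (m : ℕ) :
    traceCoeff A m = (-1) ^ m * (det (1 + (X : ℂ[X]) • A.map C)).coeff m := by
  refine expCoeff_eq_of_succ_mul (fun l => trace (A ^ l))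
    (fun m => (-1) ^ m * (det (1 + (X : ℂ[X]) • A.map C)).coeff m)
    (by rw [pow_zero, one_mul, coeff_zero_det_one_add_X_smul]) (fun t => ?_) m
  rw [mul_left_comm, succ_mul_coeff_det_one_add_X_smul, mul_sum, ← sum_neg_distrib]
  refine sum_congr rfl fun r hr => ?_
  rw [neg_one_pow_sub_eq_pow_add (by simpa [Nat.lt_succ_iff] using hr)]
  ring

theorem redComp_trace_expansion_general {n : ℕ} (A : Matrix (Fin n) (Fin n) ℂ) (s : ℕ) :
    redComp s A
      = (-1 : ℂ) ^ (n - s) •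
          ∑ r ∈ Finset.range (n - s + 1), traceCoeff A (n - s - r) • A ^ r := by
  rw [redComp_eq_coeff_adjugateOneAddXSmul, coeff_adjugateOneAddXSmul, smul_sum]
  refine sum_congr rfl fun r hr => ?_
  have hr : r ≤ n - s := by simpa [Nat.lt_succ_iff] using hr
  rw [traceCoeff_eq_neg_one_pow_mul_coeff_det, smul_smul, neg_one_pow_sub_eq_pow_add hr,
    ← mul_assoc, ← pow_add, show n - s + (n - s + r) = r + 2 * (n - s) by omega, pow_add, pow_mul,
    neg_one_sq, one_pow, mul_one]

/-- Trace expansion of the reduced order-one complement: for an `n×n` complex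
matrix `A` and `0 ≤ s ≤ n`,
`redComp s A = (−1)^(n−s) • ∑_{r=0}^{n−s} c_{n−s−r} • A^r`. -/
theorem redComp_trace_expansion {n : ℕ} (A : Matrix (Fin n) (Fin n) ℂ) (s : ℕ)
    (hs : s ≤ n) :
    redComp s A
      = (-1 : ℂ) ^ (n - s) •
          ∑ r ∈ Finset.range (n - s + 1), traceCoeff A (n - s - r) • A ^ r :=
  redComp_trace_expansion_general A s
end

section
/- (Generalized Cauchy–Binet formula) Let R be a commutative ring, let A be a p×m matrix and B an m×q matrix over R, let s ≤ m, and let J be an s-element subset of Fin p and I an s-element subset of Fin q. Then det((A*B).submatrix e_J e_I) = ∑_{K} det(A.submatrix e_J e_K) · det(B.submatrix e_K e_I), where the sum runs over all s-element subsets K of Fin m. -/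
/-!
Expanding each column of `A * B` as a combination of columns of `A` writes `det (A * B)` as a
sum over all maps `f : Fin s → Fin m` of `det (A.submatrix id f) * ∏ i, B (f i) i`. Terms with
non-injective `f` vanish, and every injective `f` factors uniquely as `e_K ∘ σ` with `K` its image
and `σ` a permutation; summing over `σ` first turns `sign σ * ∏ i, B (e_K (σ i)) i` into
`det (B.submatrix e_K id)`. Minors of `A * B` are products of row- and column-submatrices, so the
general case reduces to the square one.
-/

open Finset Matrix Equiv Function

namespace Matrix

variable {R n ι : Type*} [CommRing R] [Fintype n] [DecidableEq n]

theorem det_submatrix_id_eq_zero_of_not_injective (A : Matrix n ι R) {f : n → ι}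
    (hf : ¬Injective f) : (A.submatrix id f).det = 0 := by
  obtain ⟨i, j, hij, hne⟩ : ∃ i j, f i = f j ∧ i ≠ j := by
    simpa [Injective] using hf
  exact det_zero_of_column_eq hne fun k => by simp [hij]

variable [Fintype ι]

theorem det_mul_eq_sum_det_submatrix_mul_prod (A : Matrix n ι R) (B : Matrix ι n R) :
    (A * B).det = ∑ f : n → ι, (A.submatrix id f).det * ∏ i, B (f i) i := by
  simp only [det_apply', mul_apply, prod_univ_sum, mul_sum, Fintype.piFinset_univ, sum_mul]
  rw [Finset.sum_comm]
  refine sum_congr rfl fun f _ => sum_congr rfl fun σ _ => ?_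
  simp only [submatrix_apply, id, prod_mul_distrib]
  ring

end Matrix

section OrderEmbOfFin

variable {ι : Type*} [LinearOrder ι] {s : ℕ}

theorem Finset.orderEmbOfFin_comp_perm_injective :
    Injective fun p : {K : Finset ι // K.card = s} × Perm (Fin s) =>
      ⇑(p.1.1.orderEmbOfFin p.1.2) ∘ ⇑p.2 := by
  rintro ⟨⟨K, hK⟩, σ⟩ ⟨⟨K', hK'⟩, σ'⟩ h
  have hrange : (K : Set ι) = K' :=
    calc (K : Set ι) = Set.range (K.orderEmbOfFin hK ∘ σ) := by
          rw [σ.surjective.range_comp, range_orderEmbOfFin]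
      _ = Set.range (K'.orderEmbOfFin hK' ∘ σ') := congrArg Set.range h
      _ = K' := by rw [σ'.surjective.range_comp, range_orderEmbOfFin]
  obtain rfl : K = K' := Finset.coe_injective hrange
  exact Prod.ext rfl <| Equiv.ext fun i => (K.orderEmbOfFin hK).injective (congrFun h i)

/-- Sorting an injective `f` gives the increasing enumeration of its image. -/
theorem Function.Injective.exists_orderEmbOfFin_comp_perm {f : Fin s → ι}
    (hf : Injective f) :
    ∃ (K : {K : Finset ι // K.card = s}) (σ : Perm (Fin s)),
      ⇑(K.1.orderEmbOfFin K.2) ∘ ⇑σ = f := by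
  have hcard : (univ.image f).card = s := by
    rw [card_image_of_injective _ hf, card_univ, Fintype.card_fin]
  have hsorted : StrictMono (f ∘ Tuple.sort f) :=
    (Tuple.monotone_sort f).strictMono_of_injective (hf.comp (Tuple.sort f).injective)
  have henum : f ∘ Tuple.sort f = (univ.image f).orderEmbOfFin hcard :=
    orderEmbOfFin_unique hcard (fun i => mem_image_of_mem f (mem_univ _)) hsorted
  refine ⟨⟨_, hcard⟩, (Tuple.sort f)⁻¹, ?_⟩
  rw [← henum, comp_assoc, ← Perm.coe_mul, mul_inv_cancel, Perm.coe_one, comp_id]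

theorem Finset.sum_filter_injective_eq_sum_orderEmbOfFin_comp_perm [Fintype ι]
    {M : Type*} [AddCommMonoid M] (g : (Fin s → ι) → M) :
    ∑ f : Fin s → ι with Injective f, g f =
      ∑ K : {K : Finset ι // K.card = s}, ∑ σ : Perm (Fin s),
        g (⇑(K.1.orderEmbOfFin K.2) ∘ ⇑σ) := by
  rw [← Fintype.sum_prod_type']
  symm
  refine sum_nbij (fun p => ⇑(p.1.1.orderEmbOfFin p.1.2) ∘ ⇑p.2) ?_
    (orderEmbOfFin_comp_perm_injective.injOn) ?_ fun _ _ => rfl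
  · intro p _
    simpa using (p.1.1.orderEmbOfFin p.1.2).injective.comp p.2.injective
  · intro f hf
    obtain ⟨K, σ, h⟩ := (mem_filter.1 hf).2.exists_orderEmbOfFin_comp_perm
    exact ⟨(K, σ), mem_univ _, h⟩

end OrderEmbOfFin

namespace Matrix

variable {R ι : Type*} [CommRing R] [LinearOrder ι] [Fintype ι] {s : ℕ}

theorem det_mul_eq_sum_det_submatrix_mul_det_submatrix (A : Matrix (Fin s) ι R)
    (B : Matrix ι (Fin s) R) :
    (A * B).det = ∑ K : {K : Finset ι // K.card = s},
      (A.submatrix id (K.1.orderEmbOfFin K.2)).det *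
        (B.submatrix (K.1.orderEmbOfFin K.2) id).det := by
  have hvanish (f : Fin s → ι) (hf : ¬Injective f) :
      (A.submatrix id f).det * ∏ i, B (f i) i = 0 := by
    rw [det_submatrix_id_eq_zero_of_not_injective A hf, zero_mul]
  rw [det_mul_eq_sum_det_submatrix_mul_prod,
    ← sum_filter_of_ne fun f _ => not_imp_comm.1 (hvanish f),
    sum_filter_injective_eq_sum_orderEmbOfFin_comp_perm]
  refine sum_congr rfl fun K _ => ?_
  set e := K.1.orderEmbOfFin K.2
  calc ∑ σ : Perm (Fin s), (A.submatrix id (e ∘ σ)).det * ∏ i, B (e (σ i)) i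
      = ∑ σ : Perm (Fin s), (A.submatrix id e).det * (Perm.sign σ * ∏ i, B (e (σ i)) i) := by
        refine sum_congr rfl fun σ _ => ?_
        change ((A.submatrix id e).submatrix id σ).det * _ = _
        rw [det_permute']
        ring
    _ = (A.submatrix id e).det * (B.submatrix e id).det := by
        rw [← mul_sum, det_apply' (B.submatrix e id)]
        rfl

end Matrix

theorem generalized_cauchy_binet_general {R : Type*} [CommRing R] {p m q : ℕ}
    (A : Matrix (Fin p) (Fin m) R) (B : Matrix (Fin m) (Fin q) R) (s : ℕ)
    (J : Finset (Fin p)) (hJ : J.card = s)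
    (I : Finset (Fin q)) (hI : I.card = s) :
    ((A * B).submatrix (⇑(J.orderEmbOfFin hJ)) (⇑(I.orderEmbOfFin hI))).det
      = ∑ K : {K : Finset (Fin m) // K.card = s},
          (A.submatrix (⇑(J.orderEmbOfFin hJ)) (⇑(K.1.orderEmbOfFin K.2))).det *
            (B.submatrix (⇑(K.1.orderEmbOfFin K.2)) (⇑(I.orderEmbOfFin hI))).det := by
  rw [submatrix_mul A B _ id _ bijective_id, det_mul_eq_sum_det_submatrix_mul_det_submatrix]
  simp only [submatrix_submatrix, comp_id, id_comp]

/-- Generalized Cauchy–Binet formula: for a `p×m` matrix `A` and an `m×q` matrix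
`B` over a commutative ring, `s ≤ m`, an `s`-element subset `J` of `Fin p` and an
`s`-element subset `I` of `Fin q`, the `(J,I)` minor of `A*B` of order `s` equals
the sum over all `s`-element subsets `K` of `Fin m` of the products of the
corresponding minors of `A` and `B`. -/
theorem generalized_cauchy_binet {R : Type*} [CommRing R] {p m q : ℕ}
    (A : Matrix (Fin p) (Fin m) R) (B : Matrix (Fin m) (Fin q) R) (s : ℕ)
    (hs : s ≤ m) (J : Finset (Fin p)) (hJ : J.card = s)
    (I : Finset (Fin q)) (hI : I.card = s) :
    ((A * B).submatrix (⇑(J.orderEmbOfFin hJ)) (⇑(I.orderEmbOfFin hI))).det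
      = ∑ K : {K : Finset (Fin m) // K.card = s},
          (A.submatrix (⇑(J.orderEmbOfFin hJ)) (⇑(K.1.orderEmbOfFin K.2))).det *
            (B.submatrix (⇑(K.1.orderEmbOfFin K.2)) (⇑(I.orderEmbOfFin hI))).det :=
  generalized_cauchy_binet_general A B s J hJ I hI
end

section
/- (Generalized Laplace expansion with orthogonality) Let R be a commutative ring, let A be an n×n matrix over R, let 1 ≤ s ≤ n, and let I and J be s-element subsets of Fin n. Then ∑_{K} (−1)^(Σ(K) + Σ(I)) · det(A.submatrix e_J e_K) · det(A.submatrix e_{Iᶜ} e_{Kᶜ}) equals det A if I = J and equals 0 if I ≠ J, where the sum runs over all s-element subsets K of Fin n. (This is the contraction identity A^{j_1}_{k_1}⋯A^{j_s}_{k_s}·(det_s A)^{k_1…k_s}_{i_1…i_s} = δ^{j_1…j_s}_{i_1…i_s}·det A of the paper, written through signed complementary minors.) -/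
namespace GenLaplaceAux

open Equiv Finset Matrix

variable {n s : ℕ}

theorem compl_card {K : Finset (Fin n)} (hK : K.card = s) : Kᶜ.card = n - s := by
  simp [Finset.card_compl, hK]

/-- The block enumeration equivalence: `inl` goes to `K` in order, `inr` to `Kᶜ`. -/
noncomputable def tau (K : Finset (Fin n)) (hK : K.card = s) : (Fin s ⊕ Fin (n - s)) ≃ Fin n :=
  Equiv.ofBijective (Sum.elim (K.orderEmbOfFin hK) (Kᶜ.orderEmbOfFin (compl_card hK)))
    (by
      constructor
      · rintro (a | a) (b | b) h <;> simp only [Sum.elim_inl, Sum.elim_inr] at h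
        · exact congrArg Sum.inl ((K.orderEmbOfFin hK).injective h)
        · exact absurd (h ▸ K.orderEmbOfFin_mem hK a)
            (Finset.mem_compl.1 (Kᶜ.orderEmbOfFin_mem (compl_card hK) b))
        · exact absurd (h.symm ▸ K.orderEmbOfFin_mem hK b)
            (Finset.mem_compl.1 (Kᶜ.orderEmbOfFin_mem (compl_card hK) a))
        · exact congrArg Sum.inr ((Kᶜ.orderEmbOfFin (compl_card hK)).injective h)
      · intro x
        by_cases hx : x ∈ K
        · obtain ⟨a, ha⟩ := (Set.ext_iff.1 (K.range_orderEmbOfFin hK) x).2 hx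
          exact ⟨Sum.inl a, ha⟩
        · obtain ⟨a, ha⟩ := (Set.ext_iff.1 (Kᶜ.range_orderEmbOfFin (compl_card hK)) x).2
            (by simpa using hx)
          exact ⟨Sum.inr a, ha⟩)

@[simp] theorem tau_inl (K : Finset (Fin n)) (hK : K.card = s) (a : Fin s) :
    tau K hK (Sum.inl a) = K.orderEmbOfFin hK a := rfl

@[simp] theorem tau_inr (K : Finset (Fin n)) (hK : K.card = s) (b : Fin (n - s)) :
    tau K hK (Sum.inr b) = Kᶜ.orderEmbOfFin (compl_card hK) b := rfl

@[simp] theorem tau_symm_left (K : Finset (Fin n)) (hK : K.card = s) (a : Fin s) :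
    (tau K hK).symm (K.orderEmbOfFin hK a) = Sum.inl a := by
  rw [← tau_inl K hK a, Equiv.symm_apply_apply]

@[simp] theorem tau_symm_right (K : Finset (Fin n)) (hK : K.card = s) (b : Fin (n - s)) :
    (tau K hK).symm (Kᶜ.orderEmbOfFin (compl_card hK) b) = Sum.inr b := by
  rw [← tau_inr K hK b, Equiv.symm_apply_apply]

/-- The canonical block equivalence. -/
def iota (hsn : s ≤ n) : (Fin s ⊕ Fin (n - s)) ≃ Fin n :=
  finSumFinEquiv.trans (finCongr (Nat.add_sub_cancel' hsn))

@[simp] theorem iota_inl (hsn : s ≤ n) (a : Fin s) :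
    ((iota hsn (Sum.inl a)) : ℕ) = a := rfl

@[simp] theorem iota_inr (hsn : s ≤ n) (b : Fin (n - s)) :
    ((iota hsn (Sum.inr b)) : ℕ) = s + b := rfl


theorem swap_lt_swap {a b x y : Fin n} (hab : (b : ℕ) = a + 1) (hxy : x < y)
    (h : ¬(x = a ∧ y = b)) : Equiv.swap a b x < Equiv.swap a b y := by
  have hab' : a ≠ b := by intro h; rw [h] at hab; omega
  rcases eq_or_ne x a with rfl | hxa
  · rcases eq_or_ne y b with rfl | hyb
    · exact absurd ⟨rfl, rfl⟩ h
    · rw [Equiv.swap_apply_left, Equiv.swap_apply_of_ne_of_ne (ne_of_gt hxy) hyb]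
      have : (x : ℕ) < (y : ℕ) := hxy
      have : (y : ℕ) ≠ (b : ℕ) := fun hh => hyb (Fin.ext hh)
      exact Fin.lt_def.2 (by omega)
  · rcases eq_or_ne x b with rfl | hxb
    · have hya : y ≠ a := by
        intro hh; subst hh
        exact absurd hxy (by simp [Fin.lt_def, hab])
      have hyb : y ≠ x := ne_of_gt hxy
      rw [Equiv.swap_apply_right, Equiv.swap_apply_of_ne_of_ne hya hyb]
      have h1 : (x : ℕ) < (y : ℕ) := hxy
      exact Fin.lt_def.2 (by omega)
    · rw [Equiv.swap_apply_of_ne_of_ne hxa hxb]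
      rcases eq_or_ne y a with rfl | hya
      · rw [Equiv.swap_apply_left]
        exact Fin.lt_def.2 (by have : (x:ℕ) < (y:ℕ) := hxy; omega)
      · rcases eq_or_ne y b with rfl | hyb
        · rw [Equiv.swap_apply_right]
          have h1 : (x : ℕ) < (y : ℕ) := hxy
          have h2 : (x : ℕ) ≠ (a : ℕ) := fun hh => hxa (Fin.ext hh)
          exact Fin.lt_def.2 (by omega)
        · rw [Equiv.swap_apply_of_ne_of_ne hya hyb]; exact hxy

theorem card_swapSet {K : Finset (Fin n)} (hK : K.card = s) {a b : Fin n}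
    (haK : a ∈ K) (hbK : b ∉ K) : (insert b (K.erase a)).card = s := by
  have hba : b ∉ K.erase a := fun h => hbK (Finset.mem_of_mem_erase h)
  rw [Finset.card_insert_of_notMem hba, Finset.card_erase_of_mem haK, hK]
  have : 1 ≤ s := by
    have := Finset.card_pos.2 ⟨a, haK⟩; omega
  omega

theorem sum_swapSet {K : Finset (Fin n)} {a b : Fin n} (hab : (b : ℕ) = a + 1)
    (haK : a ∈ K) (hbK : b ∉ K) :
    (∑ i ∈ insert b (K.erase a), (i : ℕ)) = (∑ i ∈ K, (i : ℕ)) + 1 := by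
  have hba : b ∉ K.erase a := fun h => hbK (Finset.mem_of_mem_erase h)
  have h1 : (∑ i ∈ K.erase a, (i : ℕ)) + (a : ℕ) = ∑ i ∈ K, (i : ℕ) :=
    Finset.sum_erase_add K _ haK
  rw [Finset.sum_insert hba]
  omega

theorem orderEmb_swap {K : Finset (Fin n)} (hK : K.card = s) {a b : Fin n}
    (hab : (b : ℕ) = a + 1) (haK : a ∈ K) (hbK : b ∉ K) :
    (fun i => Equiv.swap a b (K.orderEmbOfFin hK i)) =
      (insert b (K.erase a)).orderEmbOfFin (card_swapSet hK haK hbK) := by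
  apply Finset.orderEmbOfFin_unique
  · intro i
    set x := K.orderEmbOfFin hK i with hx
    have hxK : x ∈ K := K.orderEmbOfFin_mem hK i
    have hxb : x ≠ b := fun h => hbK (h ▸ hxK)
    rcases eq_or_ne x a with rfl | hxa
    · rw [Equiv.swap_apply_left]; exact Finset.mem_insert_self _ _
    · rw [Equiv.swap_apply_of_ne_of_ne hxa hxb]
      exact Finset.mem_insert_of_mem (Finset.mem_erase.2 ⟨hxa, hxK⟩)
  · intro i j hij
    refine swap_lt_swap hab ((K.orderEmbOfFin hK).strictMono hij) ?_
    rintro ⟨-, h2⟩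
    exact hbK (h2 ▸ K.orderEmbOfFin_mem hK j)

theorem orderEmb_swap_compl {K : Finset (Fin n)} (hKc : Kᶜ.card = n - s) {a b : Fin n}
    (hab : (b : ℕ) = a + 1) (haK : a ∈ K) (hbK : b ∉ K)
    (h' : (insert b (K.erase a))ᶜ.card = n - s) :
    (fun i => Equiv.swap a b (Kᶜ.orderEmbOfFin hKc i)) =
      (insert b (K.erase a))ᶜ.orderEmbOfFin h' := by
  have hne : a ≠ b := fun h => by rw [h] at hab; omega
  apply Finset.orderEmbOfFin_unique
  · intro i
    set x := Kᶜ.orderEmbOfFin hKc i with hx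
    have hxK : x ∉ K := Finset.mem_compl.1 (Kᶜ.orderEmbOfFin_mem hKc i)
    have hxa : x ≠ a := fun h => hxK (h ▸ haK)
    rcases eq_or_ne x b with rfl | hxb
    · rw [Equiv.swap_apply_right]
      exact Finset.mem_compl.2 (by simp [hne, Finset.mem_erase])
    · rw [Equiv.swap_apply_of_ne_of_ne hxa hxb]
      refine Finset.mem_compl.2 ?_
      simp only [Finset.mem_insert, Finset.mem_erase]
      push_neg
      exact ⟨hxb, fun _ => hxK⟩
  · intro i j hij
    refine swap_lt_swap hab ((Kᶜ.orderEmbOfFin hKc).strictMono hij) ?_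
    rintro ⟨h1, -⟩
    exact Finset.mem_compl.1 (h1 ▸ Kᶜ.orderEmbOfFin_mem hKc i) haK


/-- Initial segment `{0,…,s-1}` of `Fin n`. -/
def initK (hsn : s ≤ n) : Finset (Fin n) :=
  (Finset.univ : Finset (Fin s)).image (Fin.castLE hsn)

theorem mem_initK (hsn : s ≤ n) {x : Fin n} : x ∈ initK hsn ↔ (x : ℕ) < s := by
  simp only [initK, Finset.mem_image, Finset.mem_univ, true_and]
  constructor
  · rintro ⟨a, rfl⟩; exact a.2
  · intro h; exact ⟨⟨x, h⟩, rfl⟩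

theorem card_initK (hsn : s ≤ n) : (initK hsn).card = s := by
  rw [initK, Finset.card_image_of_injective _ (Fin.castLE_injective hsn)]
  simp

theorem sum_initK (hsn : s ≤ n) :
    (∑ i ∈ initK hsn, (i : ℕ)) = ∑ i : Fin s, (i : ℕ) := by
  rw [initK, Finset.sum_image (fun a _ b _ h => Fin.castLE_injective hsn h)]
  rfl

theorem exists_descent (hsn : s ≤ n) {K : Finset (Fin n)} (hK : K.card = s)
    (hne : K ≠ initK hsn) :
    ∃ a b : Fin n, (b : ℕ) = (a : ℕ) + 1 ∧ b ∈ K ∧ a ∉ K := by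
  by_contra hcon
  push_neg at hcon
  -- downward closure
  have key : ∀ g : ℕ, ∀ x : Fin n, x ∈ K → ∀ y : Fin n, (y : ℕ) + g = (x : ℕ) → y ∈ K := by
    intro g
    induction g with
    | zero => intro x hx y hy; rwa [show y = x from Fin.ext (by omega)]
    | succ g ih =>
      intro x hx y hy
      have hz : ((⟨(y : ℕ) + 1, by omega⟩ : Fin n)) ∈ K :=
        ih x hx ⟨(y : ℕ) + 1, by omega⟩ (by simp; omega)
      by_contra hyK
      exact hyK (hcon y ⟨(y : ℕ) + 1, by omega⟩ rfl hz)
  -- every element of K is < s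
  have hlt : ∀ x ∈ K, (x : ℕ) < s := by
    intro x hx
    by_contra hxs
    push_neg at hxs
    have hTK : Finset.Iic x ⊆ K := by
      intro y hy
      rw [Finset.mem_Iic] at hy
      exact key ((x : ℕ) - (y : ℕ)) x hx y (by have : (y:ℕ) ≤ (x:ℕ) := hy; omega)
    have h1 := Finset.card_le_card hTK
    rw [Fin.card_Iic, hK] at h1
    omega
  exact hne (Finset.eq_of_subset_of_card_le
    (fun x hx => (mem_initK hsn).2 (hlt x hx)) (by rw [card_initK hsn, hK]))


theorem tau_congr {S T : Finset (Fin n)} (h : S = T) (hS : S.card = s)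
    (hT : T.card = s) : tau S hS = tau T hT := by subst h; rfl

theorem orderEmbOfFin_set_congr {S T : Finset (Fin n)} (h : S = T) {k : ℕ}
    (hS : S.card = k) (hT : T.card = k) :
    ⇑(S.orderEmbOfFin hS) = ⇑(T.orderEmbOfFin hT) := by subst h; rfl

theorem tau_init (hsn : s ≤ n) : tau (initK hsn) (card_initK hsn) = iota hsn := by
  have h1 : (fun a : Fin s => iota hsn (Sum.inl a)) =
      ⇑((initK hsn).orderEmbOfFin (card_initK hsn)) := by
    apply Finset.orderEmbOfFin_unique
    · intro a; exact (mem_initK hsn).2 (by simp)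
    · intro a b hab
      exact Fin.lt_def.2 (by simpa [iota_inl] using hab)
  have h2 : (fun b : Fin (n - s) => iota hsn (Sum.inr b)) =
      ⇑((initK hsn)ᶜ.orderEmbOfFin (compl_card (card_initK hsn))) := by
    apply Finset.orderEmbOfFin_unique
    · intro b
      refine Finset.mem_compl.2 (fun hb => ?_)
      have := (mem_initK hsn).1 hb
      simp only [iota_inr] at this
      omega
    · intro a b hab
      refine Fin.lt_def.2 ?_
      simp only [iota_inr]
      have : (a : ℕ) < (b : ℕ) := hab
      omega
  apply Equiv.ext
  rintro (a | b)
  · rw [tau_inl, ← h1]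
  · rw [tau_inr, ← h2]

theorem tau_swap {K : Finset (Fin n)} (hK : K.card = s) {a b : Fin n}
    (hab : (b : ℕ) = (a : ℕ) + 1) (haK : a ∈ K) (hbK : b ∉ K) :
    tau (insert b (K.erase a)) (card_swapSet hK haK hbK) =
      (tau K hK).trans (Equiv.swap a b) := by
  apply Equiv.ext
  rintro (i | i)
  · have := congrFun (orderEmb_swap hK hab haK hbK) i
    simp only [tau_inl, Equiv.trans_apply, ← this]
  · have := congrFun (orderEmb_swap_compl (compl_card hK) hab haK hbK
      (compl_card (card_swapSet hK haK hbK))) i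
    simp only [tau_inr, Equiv.trans_apply, ← this]

theorem sign_sigma (hsn : s ≤ n) (m : ℕ) :
    ∀ (K : Finset (Fin n)) (hK : K.card = s), (∑ i ∈ K, (i : ℕ)) = m →
      Equiv.Perm.sign (((iota hsn).symm.trans (tau K hK) : Fin n ≃ Fin n)) =
        (-1) ^ (m + ∑ i : Fin s, (i : ℕ)) := by
  induction m using Nat.strong_induction_on with
  | _ m ih =>
    intro K hK hsum
    rcases eq_or_ne K (initK hsn) with rfl | hne
    · rw [tau_init hsn]
      rw [Equiv.symm_trans_self]
      have hm : m = ∑ i : Fin s, (i : ℕ) := by rw [← hsum, sum_initK]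
      have h1 : Equiv.Perm.sign (Equiv.refl (Fin n)) = 1 := Equiv.Perm.sign_refl
      rw [h1, hm, Even.neg_one_pow ⟨_, rfl⟩]
    · obtain ⟨a, b, hab, hbK, haK⟩ := exists_descent hsn hK hne
      set K'' : Finset (Fin n) := insert a (K.erase b) with hK''def
      have haK'' : a ∈ K'' := Finset.mem_insert_self _ _
      have hbK'' : b ∉ K'' := by
        simp only [hK''def, Finset.mem_insert, Finset.mem_erase]
        push_neg
        exact ⟨fun h => haK (h ▸ hbK), fun h => absurd rfl h⟩
      have hK'' : K''.card = s := card_swapSet hK hbK haK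
      have hback : insert b (K''.erase a) = K := by
        rw [hK''def, Finset.erase_insert (fun h => haK (Finset.mem_of_mem_erase h)),
          Finset.insert_erase hbK]
      have hsum'' : (∑ i ∈ K'', (i : ℕ)) = m - 1 ∧ 1 ≤ m := by
        have := sum_swapSet hab haK'' hbK''
        rw [hback, hsum] at this
        omega
      have htau : tau K hK = (tau K'' hK'').trans (Equiv.swap a b) :=
        (tau_congr hback (card_swapSet hK'' haK'' hbK'') hK).symm.trans
          (tau_swap hK'' hab haK'' hbK'')
      rw [htau, ← Equiv.trans_assoc]
      rw [show ((iota hsn).symm.trans (tau K'' hK'')).trans (Equiv.swap a b) =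
        ((iota hsn).symm.trans (tau K'' hK'')).trans (Equiv.swap a b) from rfl]
      rw [Equiv.Perm.sign_trans]
      rw [ih (m - 1) (by omega) K'' hK'' hsum''.1]
      rw [Equiv.Perm.sign_swap (fun h => by rw [h] at hab; omega)]
      have hm : m - 1 + ∑ i : Fin s, (i : ℕ) + 1 = m + ∑ i : Fin s, (i : ℕ) := by omega
      rw [← hm, pow_succ]
      exact mul_comm _ _

section Laplace

variable {R : Type*} [CommRing R]

/-- The reassembly bijection from (column set, two block permutations) to permutations. -/
noncomputable def Phi (I : Finset (Fin n)) (hI : I.card = s) :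
    ({K : Finset (Fin n) // K.card = s} ×
        (Equiv.Perm (Fin s) × Equiv.Perm (Fin (n - s)))) → Equiv.Perm (Fin n) :=
  fun p => (tau p.1.1 p.1.2).symm.trans ((Equiv.sumCongr p.2.1 p.2.2).trans (tau I hI))

theorem Phi_mem (I : Finset (Fin n)) (hI : I.card = s)
    (p : {K : Finset (Fin n) // K.card = s} ×
        (Equiv.Perm (Fin s) × Equiv.Perm (Fin (n - s)))) (x : Fin n) :
    Phi I hI p x ∈ I ↔ x ∈ p.1.1 := by
  obtain ⟨u, rfl⟩ := (tau p.1.1 p.1.2).surjective x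
  cases u with
  | inl a =>
    simp only [Phi, Equiv.trans_apply, Equiv.symm_apply_apply, Equiv.sumCongr_apply,
      Sum.map_inl, tau_inl]
    simp
  | inr b =>
    simp only [Phi, Equiv.trans_apply, Equiv.sumCongr_apply, tau_symm_right,
      Sum.map_inr, tau_inr]
    refine iff_of_false ?_ ?_
    · exact Finset.mem_compl.1 (Iᶜ.orderEmbOfFin_mem (compl_card hI) _)
    · exact Finset.mem_compl.1 ((p.1.1)ᶜ.orderEmbOfFin_mem (compl_card p.1.2) _)

theorem Phi_bijective (hsn : s ≤ n) (I : Finset (Fin n)) (hI : I.card = s) :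
    Function.Bijective (Phi I hI) := by
  rw [Fintype.bijective_iff_injective_and_card]
  constructor
  · rintro ⟨⟨K, hK⟩, π₁, π₂⟩ ⟨⟨K', hK'⟩, π₁', π₂'⟩ h
    have hKK : K = K' := by
      apply Finset.ext
      intro x
      rw [← Phi_mem I hI (⟨⟨K, hK⟩, π₁, π₂⟩) x, h, Phi_mem]
    subst hKK
    have hsc : Equiv.sumCongr π₁ π₂ = Equiv.sumCongr π₁' π₂' := by
      apply Equiv.ext
      intro u
      have h2 := congrFun (congrArg (fun (e : Equiv.Perm (Fin n)) => (e : Fin n → Fin n)) h)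
        (tau K hK u)
      simp only [Phi, Equiv.trans_apply, Equiv.symm_apply_apply] at h2
      exact (tau I hI).injective h2
    have h1 : π₁ = π₁' := by
      apply Equiv.ext; intro a
      have := congrFun (congrArg (fun (e : Equiv.Perm (Fin s ⊕ Fin (n - s)))
        => (e : _ → _)) hsc) (Sum.inl a)
      simpa using this
    have h2 : π₂ = π₂' := by
      apply Equiv.ext; intro b
      have := congrFun (congrArg (fun (e : Equiv.Perm (Fin s ⊕ Fin (n - s)))
        => (e : _ → _)) hsc) (Sum.inr b)
      simpa using this
    simp [h1, h2]
  · simp only [Fintype.card_prod, Fintype.card_perm, Fintype.card_fin, Fintype.card_finset_len,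
      Fintype.card_coe]
    rw [← Nat.choose_mul_factorial_mul_factorial hsn]
    ring

theorem sign_Phi (hsn : s ≤ n) (I : Finset (Fin n)) (hI : I.card = s)
    (p : {K : Finset (Fin n) // K.card = s} ×
        (Equiv.Perm (Fin s) × Equiv.Perm (Fin (n - s)))) :
    Equiv.Perm.sign (Phi I hI p) =
      Equiv.Perm.sign ((iota hsn).symm.trans (tau I hI)) *
      Equiv.Perm.sign ((iota hsn).symm.trans (tau p.1.1 p.1.2)) *
      Equiv.Perm.sign p.2.1 * Equiv.Perm.sign p.2.2 := by
  have hdec : Phi I hI p =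
      (((iota hsn).symm.trans (tau p.1.1 p.1.2)).symm.trans
        ((iota hsn).symm.trans ((Equiv.sumCongr p.2.1 p.2.2).trans (iota hsn)))).trans
        ((iota hsn).symm.trans (tau I hI)) := by
    apply Equiv.ext
    intro x
    simp [Phi, Equiv.trans_apply]
  rw [hdec]
  rw [Equiv.Perm.sign_trans, Equiv.Perm.sign_trans, Equiv.Perm.sign_symm]
  have hm : Equiv.Perm.sign ((iota hsn).symm.trans
        ((Equiv.sumCongr p.2.1 p.2.2).trans (iota hsn)))
      = Equiv.Perm.sign (Equiv.sumCongr p.2.1 p.2.2) :=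
    Equiv.Perm.sign_eq_sign_of_equiv _ _ (iota hsn).symm (fun x => by simp)
  rw [hm, Equiv.Perm.sign_sumCongr]
  simp [mul_assoc, mul_comm, mul_left_comm]

theorem prod_Phi (I : Finset (Fin n)) (hI : I.card = s)
    (B : Matrix (Fin n) (Fin n) R)
    (p : {K : Finset (Fin n) // K.card = s} ×
        (Equiv.Perm (Fin s) × Equiv.Perm (Fin (n - s)))) :
    (∏ i, B (Phi I hI p i) i) =
      (∏ a, B (I.orderEmbOfFin hI (p.2.1 a)) (p.1.1.orderEmbOfFin p.1.2 a)) *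
      ∏ b, B (Iᶜ.orderEmbOfFin (compl_card hI) (p.2.2 b))
        ((p.1.1)ᶜ.orderEmbOfFin (compl_card p.1.2) b) := by
  rw [← Equiv.prod_comp (tau p.1.1 p.1.2) (fun i => B (Phi I hI p i) i)]
  rw [Fintype.prod_sum_type]
  congr 1 <;> (apply Finset.prod_congr rfl; intro x _) <;>
    simp [Phi, Equiv.trans_apply, Equiv.symm_apply_apply]

/-- Generalized Laplace expansion of the determinant along the rows `I`. -/
theorem laplace (hsn : s ≤ n) (B : Matrix (Fin n) (Fin n) R)
    (I : Finset (Fin n)) (hI : I.card = s) :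
    B.det = ∑ K : {K : Finset (Fin n) // K.card = s},
      ((Equiv.Perm.sign ((iota hsn).symm.trans (tau I hI)) : ℤ) : R) *
      ((Equiv.Perm.sign ((iota hsn).symm.trans (tau K.1 K.2)) : ℤ) : R) *
      (B.submatrix (⇑(I.orderEmbOfFin hI)) (⇑(K.1.orderEmbOfFin K.2))).det *
      (B.submatrix (⇑(Iᶜ.orderEmbOfFin (compl_card hI)))
        (⇑(K.1ᶜ.orderEmbOfFin (compl_card K.2)))).det := by
  rw [Matrix.det_apply']
  rw [← Fintype.sum_bijective (Phi I hI) (Phi_bijective hsn I hI)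
    (fun p =>
      ((Equiv.Perm.sign ((iota hsn).symm.trans (tau I hI)) : ℤ) : R) *
      ((Equiv.Perm.sign ((iota hsn).symm.trans (tau p.1.1 p.1.2)) : ℤ) : R) *
      (((Equiv.Perm.sign p.2.1 : ℤ) : R) *
        ∏ a, B (I.orderEmbOfFin hI (p.2.1 a)) (p.1.1.orderEmbOfFin p.1.2 a)) *
      (((Equiv.Perm.sign p.2.2 : ℤ) : R) *
        ∏ b, B (Iᶜ.orderEmbOfFin (compl_card hI) (p.2.2 b))
          ((p.1.1)ᶜ.orderEmbOfFin (compl_card p.1.2) b)))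
    _ (fun p => by
      rw [sign_Phi hsn I hI p, prod_Phi I hI B p]
      push_cast
      ring)]
  rw [Fintype.sum_prod_type]
  apply Finset.sum_congr rfl
  intro K _
  rw [Matrix.det_apply', Matrix.det_apply', Fintype.sum_prod_type]
  simp only [Matrix.submatrix_apply]
  rw [mul_assoc, Finset.sum_mul_sum, Finset.mul_sum]
  apply Finset.sum_congr rfl
  intro π₁ _
  rw [Finset.mul_sum]
  apply Finset.sum_congr rfl
  intro π₂ _
  ring

theorem sign_prod (hsn : s ≤ n) (I K : Finset (Fin n)) (hI : I.card = s) (hK : K.card = s) :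
    ((Equiv.Perm.sign ((iota hsn).symm.trans (tau I hI)) : ℤ) : R) *
      ((Equiv.Perm.sign ((iota hsn).symm.trans (tau K hK)) : ℤ) : R) =
      (-1 : R) ^ ((∑ i ∈ K, (i : ℕ)) + ∑ i ∈ I, (i : ℕ)) := by
  rw [sign_sigma hsn _ I hI rfl, sign_sigma hsn _ K hK rfl]
  set c := ∑ i : Fin s, (i : ℕ) with hc
  set x := ∑ i ∈ I, (i : ℕ)
  set y := ∑ i ∈ K, (i : ℕ)
  have h1 : (((-1 : ℤˣ) ^ (x + c) : ℤˣ) : ℤ) = (-1 : ℤ) ^ (x + c) := by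
    simp
  have h2 : (((-1 : ℤˣ) ^ (y + c) : ℤˣ) : ℤ) = (-1 : ℤ) ^ (y + c) := by
    simp
  rw [h1, h2]
  push_cast
  rw [← pow_add, show x + c + (y + c) = (y + x) + (c + c) by omega, pow_add,
    Even.neg_one_pow ⟨c, rfl⟩, mul_one]

theorem iso_symm_emb {I : Finset (Fin n)} (hI : I.card = s) (a : Fin s)
    (h : I.orderEmbOfFin hI a ∈ I) :
    (I.orderIsoOfFin hI).symm ⟨I.orderEmbOfFin hI a, h⟩ = a := by
  rw [OrderIso.symm_apply_eq]
  exact Subtype.ext (Finset.coe_orderIsoOfFin_apply I hI a).symm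

end Laplace

end GenLaplaceAux

open GenLaplaceAux in
/-- Generalized Laplace expansion with orthogonality: for an `n×n` matrix `A` over
a commutative ring, `1 ≤ s ≤ n`, and `s`-element subsets `I`, `J` of `Fin n`,
`∑_K (−1)^(Σ(K)+Σ(I)) · det (A.submatrix e_J e_K) · det (A.submatrix e_{Iᶜ} e_{Kᶜ})`
equals `det A` if `I = J` and `0` otherwise, the sum running over all `s`-element
subsets `K` of `Fin n`. -/
theorem generalized_laplace_orthogonality {R : Type*} [CommRing R] {n : ℕ}
    (A : Matrix (Fin n) (Fin n) R) (s : ℕ) (hs1 : 1 ≤ s) (hsn : s ≤ n)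
    (I J : Finset (Fin n)) (hI : I.card = s) (hJ : J.card = s) :
    (∑ K : {K : Finset (Fin n) // K.card = s},
        (-1 : R) ^ ((∑ i ∈ K.1, (i : ℕ)) + ∑ i ∈ I, (i : ℕ)) *
          (A.submatrix (⇑(J.orderEmbOfFin hJ)) (⇑(K.1.orderEmbOfFin K.2))).det *
          (A.submatrix
            (⇑(Iᶜ.orderEmbOfFin
                (by simp [Finset.card_compl, hI, Fintype.card_fin] : Iᶜ.card = n - s)))
            (⇑(K.1ᶜ.orderEmbOfFin
                (by simp [Finset.card_compl, K.2, Fintype.card_fin] :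
                  K.1ᶜ.card = n - s)))).det)
      = if I = J then A.det else 0 := by
  classical
  set r : Fin n → Fin n := fun x =>
    if h : x ∈ I then J.orderEmbOfFin hJ ((I.orderIsoOfFin hI).symm ⟨x, h⟩) else x with hr
  set B : Matrix (Fin n) (Fin n) R := A.submatrix r id with hB
  have hrI : ∀ a : Fin s, r (I.orderEmbOfFin hI a) = J.orderEmbOfFin hJ a := by
    intro a
    rw [hr]
    simp only [I.orderEmbOfFin_mem hI a, dif_pos]
    rw [iso_symm_emb]
  have hrIc : ∀ x : Fin n, x ∉ I → r x = x := by
    intro x hx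
    rw [hr]
    simp [hx]
  have hmain : (∑ K : {K : Finset (Fin n) // K.card = s},
        (-1 : R) ^ ((∑ i ∈ K.1, (i : ℕ)) + ∑ i ∈ I, (i : ℕ)) *
          (A.submatrix (⇑(J.orderEmbOfFin hJ)) (⇑(K.1.orderEmbOfFin K.2))).det *
          (A.submatrix (⇑(Iᶜ.orderEmbOfFin (compl_card hI)))
            (⇑(K.1ᶜ.orderEmbOfFin (compl_card K.2)))).det) = B.det := by
    rw [laplace hsn B I hI]
    apply Finset.sum_congr rfl
    intro K _
    rw [sign_prod hsn I K.1 hI K.2]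
    congr 1
    · congr 1
      refine congrArg Matrix.det ?_
      apply Matrix.ext
      intro a b
      simp only [Matrix.submatrix_apply, hB, Function.id_def]
      rw [hrI a]
    · refine congrArg Matrix.det ?_
      apply Matrix.ext
      intro a b
      simp only [Matrix.submatrix_apply, hB, Function.id_def]
      rw [hrIc _ (Finset.mem_compl.1 (Iᶜ.orderEmbOfFin_mem (compl_card hI) a))]
  rw [hmain]
  split_ifs with hIJ
  · subst hIJ
    have hre : r = id := by
      funext x
      by_cases hx : x ∈ I
      · have h2 : (I.orderEmbOfFin hI) ((I.orderIsoOfFin hI).symm ⟨x, hx⟩) = x := by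
          have h3 := congrArg Subtype.val ((I.orderIsoOfFin hI).apply_symm_apply ⟨x, hx⟩)
          rwa [Finset.coe_orderIsoOfFin_apply] at h3
        rw [hr]
        simp only [hx, dif_pos]
        exact h2
      · exact hrIc x hx
    rw [hB, hre, Matrix.submatrix_id_id]
  · -- two equal rows
    have hJI : ¬ J ⊆ I := by
      intro hsub
      exact hIJ (Finset.eq_of_subset_of_card_le hsub (by omega)).symm
    obtain ⟨x, hxJ, hxI⟩ := Finset.not_subset.1 hJI
    set a : Fin s := (J.orderIsoOfFin hJ).symm ⟨x, hxJ⟩ with ha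
    have hJa : J.orderEmbOfFin hJ a = x := by
      have h3 := (J.orderIsoOfFin hJ).apply_symm_apply ⟨x, hxJ⟩
      have := congrArg Subtype.val h3
      rwa [Finset.coe_orderIsoOfFin_apply] at this
    have hne : I.orderEmbOfFin hI a ≠ x :=
      fun h => hxI (h ▸ I.orderEmbOfFin_mem hI a)
    apply Matrix.det_zero_of_row_eq hne
    funext y
    simp only [hB, Matrix.submatrix_apply, Function.id_def]
    rw [hrI a, hJa, hrIc x hxI]
end

section
/- (Jacobi's identity for minors of the inverse) Let R be a commutative ring, let A be an n×n matrix over R whose determinant is a unit, let 1 ≤ s ≤ n, and let P and Q be s-element subsets of Fin n. Then det(A) · det((A⁻¹).submatrix e_P e_Q) = (−1)^(Σ(P) + Σ(Q)) · det(A.submatrix e_{Qᶜ} e_{Pᶜ}). (This is the paper's identity (det_s A)^{J}_{I} = (det A⁻¹)^{J}_{I} · det A, written through signed complementary minors.) -/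
open Finset Matrix Equiv

section Block

variable {R : Type*} [CommRing R]

lemma jacobi_block_aux {α β : Type*} [Fintype α] [Fintype β] [DecidableEq α] [DecidableEq β]
    (M : Matrix (α ⊕ β) (α ⊕ β) R) (h : IsUnit M.det) :
    M.det * (M⁻¹.toBlocks₁₁).det = (M.toBlocks₂₂).det := by
  have hMB : M * M⁻¹ = 1 := Matrix.mul_nonsing_inv _ h
  set B := M⁻¹ with hB
  set N : Matrix (α ⊕ β) (α ⊕ β) R := Matrix.fromBlocks B.toBlocks₁₁ 0 B.toBlocks₂₁ 1 with hN
  have hN1 : ∀ k j, N k (Sum.inl j) = B k (Sum.inl j) := by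
    rintro (k | k) j <;>
      simp [hN, Matrix.fromBlocks, Matrix.toBlocks₁₁, Matrix.toBlocks₂₁]
  have hN2 : ∀ k j, N k (Sum.inr j) = (1 : Matrix (α ⊕ β) (α ⊕ β) R) k (Sum.inr j) := by
    rintro (k | k) j <;>
      simp [hN, Matrix.fromBlocks, Matrix.one_apply]
  have key : M * N = Matrix.fromBlocks 1 M.toBlocks₁₂ 0 M.toBlocks₂₂ := by
    ext i j
    rcases j with j | j
    · have : (M * N) i (Sum.inl j) = (M * B) i (Sum.inl j) := by
        rw [Matrix.mul_apply, Matrix.mul_apply]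
        exact Finset.sum_congr rfl fun k _ => by rw [hN1]
      rw [this, hMB]
      rcases i with i | i <;>
        simp [Matrix.fromBlocks, Matrix.one_apply]
    · have : (M * N) i (Sum.inr j) = (M * (1 : Matrix (α ⊕ β) (α ⊕ β) R)) i (Sum.inr j) := by
        rw [Matrix.mul_apply, Matrix.mul_apply]
        exact Finset.sum_congr rfl fun k _ => by rw [hN2]
      rw [this, mul_one]
      rcases i with i | i <;>
        simp [Matrix.fromBlocks, Matrix.toBlocks₁₂, Matrix.toBlocks₂₂]
  have hdet := congrArg Matrix.det key
  rw [Matrix.det_mul, Matrix.det_fromBlocks_zero₂₁, Matrix.det_one, one_mul] at hdet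
  rw [hN, Matrix.det_fromBlocks_zero₁₂, Matrix.det_one, mul_one] at hdet
  exact hdet

end Block

section Shuffle

variable {n s : ℕ}

/-- The equivalence `Fin s ⊕ Fin (n-s) ≃ Fin n` enumerating `P` then `Pᶜ`. -/
noncomputable def splitEquiv (hsn : s ≤ n) (P : Finset (Fin n)) (hP : P.card = s) :
    (Fin s ⊕ Fin (n - s)) ≃ Fin n :=
  Equiv.ofBijective
    (Sum.elim (⇑(P.orderEmbOfFin hP))
      (⇑(Pᶜ.orderEmbOfFin (by simp [Finset.card_compl, hP] : Pᶜ.card = n - s))))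
    (by
      rw [Fintype.bijective_iff_injective_and_card]
      constructor
      · rintro (i | i) (j | j) hij <;> simp only [Sum.elim_inl, Sum.elim_inr] at hij
        · exact congrArg Sum.inl ((P.orderEmbOfFin hP).injective hij)
        · exact absurd (hij ▸ P.orderEmbOfFin_mem hP i)
            (by simpa using Pᶜ.orderEmbOfFin_mem (by simp [Finset.card_compl, hP] : Pᶜ.card = n - s) j)
        · exact absurd (hij ▸ Pᶜ.orderEmbOfFin_mem _ i)
            (by simpa using P.orderEmbOfFin_mem hP j)
        · exact congrArg Sum.inr ((Pᶜ.orderEmbOfFin _).injective hij)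
      · simp [Nat.add_sub_cancel' hsn])

@[simp] lemma splitEquiv_inl (hsn : s ≤ n) (P : Finset (Fin n)) (hP : P.card = s) (i : Fin s) :
    splitEquiv hsn P hP (Sum.inl i) = P.orderEmbOfFin hP i := rfl

@[simp] lemma splitEquiv_inr (hsn : s ≤ n) (P : Finset (Fin n)) (hP : P.card = s)
    (j : Fin (n - s)) :
    splitEquiv hsn P hP (Sum.inr j)
      = Pᶜ.orderEmbOfFin (by simp [Finset.card_compl, hP] : Pᶜ.card = n - s) j := rfl

/-- The canonical equivalence `Fin s ⊕ Fin (n-s) ≃ Fin n`. -/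
def baseEquiv (hsn : s ≤ n) : (Fin s ⊕ Fin (n - s)) ≃ Fin n :=
  finSumFinEquiv.trans (finCongr (Nat.add_sub_cancel' hsn))

@[simp] lemma baseEquiv_inl (hsn : s ≤ n) (i : Fin s) :
    baseEquiv hsn (Sum.inl i) = ⟨(i : ℕ), lt_of_lt_of_le i.2 hsn⟩ := by
  apply Fin.ext; simp [baseEquiv]

@[simp] lemma baseEquiv_inr (hsn : s ≤ n) (j : Fin (n - s)) :
    baseEquiv hsn (Sum.inr j) = ⟨s + (j : ℕ), by omega⟩ := by
  apply Fin.ext; simp [baseEquiv]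

/-- The shuffle permutation of `Fin n` associated with an `s`-element subset. -/
noncomputable def shufflePerm (hsn : s ≤ n) (P : Finset (Fin n)) (hP : P.card = s) :
    Equiv.Perm (Fin n) :=
  (baseEquiv hsn).symm.trans (splitEquiv hsn P hP)

lemma shufflePerm_apply (hsn : s ≤ n) (P : Finset (Fin n)) (hP : P.card = s) (k : Fin n) :
    shufflePerm hsn P hP k = splitEquiv hsn P hP ((baseEquiv hsn).symm k) := rfl

end Shuffle

section Sign

variable {n s : ℕ}

lemma sign_shufflePerm (hsn : s ≤ n) (P : Finset (Fin n)) (hP : P.card = s) :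
    Equiv.Perm.sign (shufflePerm hsn P hP)
      = (-1 : ℤˣ) ^ ((∑ i ∈ P, (i : ℕ)) + ∑ i : Fin s, (i : ℕ)) := by
  suffices H : ∀ m (P : Finset (Fin n)) (hP : P.card = s), (∑ i ∈ P, (i : ℕ)) = m →
      Equiv.Perm.sign (shufflePerm hsn P hP)
        = (-1 : ℤˣ) ^ (m + ∑ i : Fin s, (i : ℕ)) from H _ P hP rfl
  intro m
  induction m using Nat.strong_induction_on with
  | _ m IH =>
  intro P hP hm
  by_cases hbase : ∀ a ∈ P, (a : ℕ) < s
  · -- base case : P = {0, ..., s-1}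
    have hcards : (Finset.univ.filter (fun x : Fin n => (x : ℕ) < s)) =
        Finset.image (fun i : Fin s => (⟨(i : ℕ), lt_of_lt_of_le i.2 hsn⟩ : Fin n))
          Finset.univ := by
      ext x
      simp only [Finset.mem_filter, Finset.mem_univ, true_and, Finset.mem_image]
      constructor
      · intro hx; exact ⟨⟨(x : ℕ), hx⟩, Fin.ext rfl⟩
      · rintro ⟨i, rfl⟩; exact i.2
    have hinj : Function.Injective
        (fun i : Fin s => (⟨(i : ℕ), lt_of_lt_of_le i.2 hsn⟩ : Fin n)) := by
      intro i j hij
      have hv := congrArg Fin.val hij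
      simp only at hv
      exact Fin.ext hv
    have hPeq : P = Finset.univ.filter (fun x : Fin n => (x : ℕ) < s) := by
      apply Finset.eq_of_subset_of_card_le
      · intro x hx; exact Finset.mem_filter.2 ⟨Finset.mem_univ x, hbase x hx⟩
      · rw [hcards, Finset.card_image_of_injective _ hinj, hP]
        simp
    have hmemP : ∀ i : Fin s, (⟨(i : ℕ), lt_of_lt_of_le i.2 hsn⟩ : Fin n) ∈ P := by
      intro i; rw [hPeq, hcards]; exact Finset.mem_image_of_mem _ (Finset.mem_univ i)
    have he1 : (fun i : Fin s => (⟨(i : ℕ), lt_of_lt_of_le i.2 hsn⟩ : Fin n))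
        = ⇑(P.orderEmbOfFin hP) :=
      Finset.orderEmbOfFin_unique hP hmemP (fun i j hij => by
        rw [Fin.lt_def] at hij ⊢; exact hij)
    have hmemPc : ∀ j : Fin (n - s), (⟨s + (j : ℕ), by omega⟩ : Fin n) ∈ Pᶜ := by
      intro j
      rw [Finset.mem_compl]
      intro hmem
      simp only [hPeq, Finset.mem_filter] at hmem
      omega
    have he2 : (fun j : Fin (n - s) => (⟨s + (j : ℕ), by omega⟩ : Fin n))
        = ⇑(Pᶜ.orderEmbOfFin (by simp [Finset.card_compl, hP] : Pᶜ.card = n - s)) :=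
      Finset.orderEmbOfFin_unique _ hmemPc (fun i j hij => by
        simp only [Fin.lt_def] at hij ⊢; omega)
    have hsp : ∀ x, splitEquiv hsn P hP x = baseEquiv hsn x := by
      rintro (i | j)
      · rw [splitEquiv_inl, ← he1, baseEquiv_inl]
      · rw [splitEquiv_inr, ← he2, baseEquiv_inr]
    have hone : shufflePerm hsn P hP = 1 := by
      apply Equiv.ext
      intro k
      rw [Equiv.Perm.one_apply, shufflePerm_apply, hsp, Equiv.apply_symm_apply]
    have hmT : m = ∑ i : Fin s, (i : ℕ) := by
      rw [← hm, hPeq, hcards, Finset.sum_image (fun i _ j _ h => hinj h)]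
    rw [hone, hmT, Equiv.Perm.sign_one]
    exact (Even.neg_one_pow ⟨_, rfl⟩).symm
  · -- there is a ∈ P with s ≤ a; find a ∈ P with predecessor not in P
    have hex : ∃ a ∈ P, ∃ b : Fin n, (b : ℕ) + 1 = (a : ℕ) ∧ b ∉ P := by
      by_contra hall
      push_neg at hall
      have hall' : ∀ a ∈ P, ∀ b : Fin n, (b : ℕ) + 1 = (a : ℕ) → b ∈ P := by
        intro a ha b hb
        by_contra hbP
        exact hbP (hall a ha b hb)
      have down : ∀ (k : ℕ) (a : Fin n), a ∈ P → ∀ j : Fin n, (j : ℕ) + k = (a : ℕ) →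
          j ∈ P := by
        intro k
        induction k with
        | zero =>
          intro a ha j hj
          have : j = a := Fin.ext (by omega)
          rwa [this]
        | succ k ih =>
          intro a ha j hj
          have hjn : (j : ℕ) + 1 < n := by have := a.isLt; omega
          have hj' : (⟨(j : ℕ) + 1, hjn⟩ : Fin n) ∈ P :=
            ih a ha ⟨(j : ℕ) + 1, hjn⟩ (by simp; omega)
          exact hall' _ hj' j (by simp)
      obtain ⟨a, haP, has⟩ : ∃ a ∈ P, s ≤ (a : ℕ) := by
        by_contra h
        push_neg at h
        exact hbase fun x hx => h x hx
      have hsub : Finset.image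
          (fun k : Fin ((a : ℕ) + 1) => (⟨(a : ℕ) - (k : ℕ), by have := a.isLt; omega⟩ : Fin n))
          Finset.univ ⊆ P := by
        intro x hx
        simp only [Finset.mem_image, Finset.mem_univ, true_and] at hx
        obtain ⟨k, rfl⟩ := hx
        exact down (k : ℕ) a haP _ (by simp; omega)
      have hinj2 : Function.Injective
          (fun k : Fin ((a : ℕ) + 1) =>
            (⟨(a : ℕ) - (k : ℕ), by have := a.isLt; omega⟩ : Fin n)) := by
        intro k₁ k₂ h
        have h' : (a : ℕ) - (k₁ : ℕ) = (a : ℕ) - (k₂ : ℕ) := congrArg Fin.val h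
        have h1 := k₁.isLt
        have h2 := k₂.isLt
        exact Fin.ext (by omega)
      have := Finset.card_le_card hsub
      rw [Finset.card_image_of_injective _ hinj2, hP] at this
      simp at this
      omega
    obtain ⟨a, haP, b, hba, hbP⟩ := hex
    have hbne : b ≠ a := fun h => hbP (h ▸ haP)
    set σ : Equiv.Perm (Fin n) := Equiv.swap b a with hσ
    set P' : Finset (Fin n) := insert b (P.erase a) with hP'def
    have hbe : b ∉ P.erase a := fun h => hbP (Finset.mem_of_mem_erase h)
    have hs1 : 1 ≤ s := by
      rw [← hP]; exact Finset.card_pos.2 ⟨a, haP⟩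
    have hP' : P'.card = s := by
      rw [hP'def, Finset.card_insert_of_notMem hbe, Finset.card_erase_of_mem haP, hP]
      omega
    have hsum' : (∑ i ∈ P', (i : ℕ)) + 1 = m := by
      rw [hP'def, Finset.sum_insert hbe, ← hm, ← Finset.add_sum_erase _ _ haP]
      omega
    -- membership facts
    have hmem1 : ∀ x : Fin n, x ∈ P → σ x ∈ P' := by
      intro x hx
      by_cases hxa : x = a
      · rw [hxa, hσ, Equiv.swap_apply_right]
        exact Finset.mem_insert_self _ _
      · have hxb : x ≠ b := fun h => hbP (h ▸ hx)
        rw [hσ, Equiv.swap_apply_of_ne_of_ne hxb hxa]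
        exact Finset.mem_insert_of_mem (Finset.mem_erase.2 ⟨hxa, hx⟩)
    have hmem2 : ∀ x : Fin n, x ∈ Pᶜ → σ x ∈ P'ᶜ := by
      intro x hx
      rw [Finset.mem_compl] at hx
      by_cases hxb : x = b
      · rw [hxb, hσ, Equiv.swap_apply_left, Finset.mem_compl, hP'def]
        intro h
        rcases Finset.mem_insert.1 h with h | h
        · exact hbne h.symm
        · exact (Finset.notMem_erase a P) h
      · have hxa : x ≠ a := fun h => hx (h ▸ haP)
        rw [hσ, Equiv.swap_apply_of_ne_of_ne hxb hxa, Finset.mem_compl, hP'def]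
        intro h
        rcases Finset.mem_insert.1 h with h | h
        · exact hxb h
        · exact hx (Finset.mem_of_mem_erase h)
    -- enumeration of P' is σ ∘ enumeration of P
    have he1 : (fun i : Fin s => σ (P.orderEmbOfFin hP i)) = ⇑(P'.orderEmbOfFin hP') := by
      apply Finset.orderEmbOfFin_unique hP'
        (fun i => hmem1 _ (P.orderEmbOfFin_mem hP i))
      intro i j hij
      show σ (P.orderEmbOfFin hP i) < σ (P.orderEmbOfFin hP j)
      have hlt : P.orderEmbOfFin hP i < P.orderEmbOfFin hP j :=
        (P.orderEmbOfFin hP).strictMono hij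
      set x := P.orderEmbOfFin hP i
      set y := P.orderEmbOfFin hP j
      have hxP : x ∈ P := P.orderEmbOfFin_mem hP i
      have hyP : y ∈ P := P.orderEmbOfFin_mem hP j
      have hxb : x ≠ b := fun h => hbP (h ▸ hxP)
      have hyb : y ≠ b := fun h => hbP (h ▸ hyP)
      by_cases hxa : x = a
      · -- x = a, so y > a, σ x = b < a < y = σ y
        have hya : y ≠ a := by intro h; rw [hxa, h] at hlt; exact lt_irrefl _ hlt
        rw [hσ, hxa, Equiv.swap_apply_right, Equiv.swap_apply_of_ne_of_ne hyb hya]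
        rw [Fin.lt_def] at hlt ⊢
        rw [hxa] at hlt
        omega
      · by_cases hya : y = a
        · -- y = a : σ y = b, x < a, x ≠ b so x < b
          rw [hσ, hya, Equiv.swap_apply_right, Equiv.swap_apply_of_ne_of_ne hxb hxa]
          have hxbv : (x : ℕ) ≠ (b : ℕ) := fun h => hxb (Fin.ext h)
          rw [Fin.lt_def] at hlt ⊢
          rw [hya] at hlt
          omega
        · rw [hσ, Equiv.swap_apply_of_ne_of_ne hxb hxa,
            Equiv.swap_apply_of_ne_of_ne hyb hya]
          exact hlt
    have hPc : Pᶜ.card = n - s := by simp [Finset.card_compl, hP]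
    have hPc' : P'ᶜ.card = n - s := by simp [Finset.card_compl, hP']
    have he2 : (fun j : Fin (n - s) => σ (Pᶜ.orderEmbOfFin hPc j))
        = ⇑(P'ᶜ.orderEmbOfFin hPc') := by
      apply Finset.orderEmbOfFin_unique hPc'
        (fun j => hmem2 _ (Pᶜ.orderEmbOfFin_mem hPc j))
      intro i j hij
      show σ (Pᶜ.orderEmbOfFin hPc i) < σ (Pᶜ.orderEmbOfFin hPc j)
      have hlt : Pᶜ.orderEmbOfFin hPc i < Pᶜ.orderEmbOfFin hPc j :=
        (Pᶜ.orderEmbOfFin hPc).strictMono hij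
      set x := Pᶜ.orderEmbOfFin hPc i
      set y := Pᶜ.orderEmbOfFin hPc j
      have hxP : x ∈ Pᶜ := Pᶜ.orderEmbOfFin_mem hPc i
      have hyP : y ∈ Pᶜ := Pᶜ.orderEmbOfFin_mem hPc j
      rw [Finset.mem_compl] at hxP hyP
      have hxa : x ≠ a := fun h => hxP (h ▸ haP)
      have hya : y ≠ a := fun h => hyP (h ▸ haP)
      by_cases hxb : x = b
      · -- x = b : σ x = a, y > b, y ≠ a so y > a
        have hyb : y ≠ b := by intro h; rw [hxb, h] at hlt; exact lt_irrefl _ hlt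
        rw [hσ, hxb, Equiv.swap_apply_left, Equiv.swap_apply_of_ne_of_ne hyb hya]
        have hyav : (y : ℕ) ≠ (a : ℕ) := fun h => hya (Fin.ext h)
        rw [Fin.lt_def] at hlt ⊢
        rw [hxb] at hlt
        omega
      · by_cases hyb : y = b
        · -- y = b : σ y = a > b > x = σ x
          rw [hσ, hyb, Equiv.swap_apply_left, Equiv.swap_apply_of_ne_of_ne hxb hxa]
          rw [Fin.lt_def] at hlt ⊢
          rw [hyb] at hlt
          omega
        · rw [hσ, Equiv.swap_apply_of_ne_of_ne hxb hxa,
            Equiv.swap_apply_of_ne_of_ne hyb hya]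
          exact hlt
    have hsp : ∀ x, splitEquiv hsn P' hP' x = σ (splitEquiv hsn P hP x) := by
      rintro (i | j)
      · rw [splitEquiv_inl, splitEquiv_inl, ← he1]
      · rw [splitEquiv_inr, splitEquiv_inr, ← he2]
    have hperm : shufflePerm hsn P' hP' = σ * shufflePerm hsn P hP := by
      apply Equiv.ext
      intro k
      rw [Equiv.Perm.mul_apply, shufflePerm_apply, shufflePerm_apply, hsp]
    have hm1 : 1 ≤ m := by
      have : (a : ℕ) ≤ m := hm ▸ Finset.single_le_sum (f := fun i : Fin n => (i : ℕ))
        (fun i _ => Nat.zero_le _) haP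
      omega
    have hIH := IH (m - 1) (by omega) P' hP' (by omega)
    rw [hperm, _root_.map_mul, Equiv.Perm.sign_swap hbne] at hIH
    have hexp : m + ∑ i : Fin s, (i : ℕ) = (m - 1 + ∑ i : Fin s, (i : ℕ)) + 1 := by omega
    rw [hexp, pow_succ, ← hIH, neg_one_mul, mul_neg_one, neg_neg]
end Sign

/-- Jacobi's identity for minors of the inverse: for an `n×n` matrix `A` over a
commutative ring whose determinant is a unit, `1 ≤ s ≤ n`, and `s`-element subsets
`P`, `Q` of `Fin n`,
`det A · det ((A⁻¹).submatrix e_P e_Q) = (−1)^(Σ(P)+Σ(Q)) · det (A.submatrix e_{Qᶜ} e_{Pᶜ})`. -/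
theorem jacobi_identity_minors_inverse {R : Type*} [CommRing R] {n : ℕ}
    (A : Matrix (Fin n) (Fin n) R) (hA : IsUnit A.det) (s : ℕ)
    (hs1 : 1 ≤ s) (hsn : s ≤ n)
    (P Q : Finset (Fin n)) (hP : P.card = s) (hQ : Q.card = s) :
    A.det * ((A⁻¹).submatrix (⇑(P.orderEmbOfFin hP)) (⇑(Q.orderEmbOfFin hQ))).det
      = (-1 : R) ^ ((∑ i ∈ P, (i : ℕ)) + ∑ i ∈ Q, (i : ℕ)) *
          (A.submatrix
            (⇑(Qᶜ.orderEmbOfFin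
                (by simp [Finset.card_compl, hQ, Fintype.card_fin] : Qᶜ.card = n - s)))
            (⇑(Pᶜ.orderEmbOfFin
                (by simp [Finset.card_compl, hP, Fintype.card_fin] :
                  Pᶜ.card = n - s)))).det := by
  set πP := shufflePerm hsn P hP with hπP
  set πQ := shufflePerm hsn Q hQ with hπQ
  set pP := splitEquiv hsn P hP with hpP
  set qQ := splitEquiv hsn Q hQ with hqQ
  set c := baseEquiv (n := n) (s := s) hsn with hc
  set A' : Matrix (Fin s ⊕ Fin (n - s)) (Fin s ⊕ Fin (n - s)) R := A.submatrix qQ pP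
    with hA'def
  -- determinant of A'
  have hqfun : ⇑qQ = ⇑πQ ∘ ⇑c := by
    funext x
    show qQ x = πQ (c x)
    rw [hπQ, shufflePerm_apply, Equiv.symm_apply_apply]
  have hpfun : ⇑pP = ⇑πP ∘ ⇑c := by
    funext x
    show pP x = πP (c x)
    rw [hπP, shufflePerm_apply, Equiv.symm_apply_apply]
  have h1 : A' = (A.submatrix πQ πP).submatrix c c := by
    rw [hA'def, Matrix.submatrix_submatrix, hqfun, hpfun]
  have h2 : A.submatrix ⇑πQ ⇑πP = (A.submatrix id ⇑πP).submatrix ⇑πQ id := by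
    rw [Matrix.submatrix_submatrix]; rfl
  have hdetA' : A'.det
      = ((Equiv.Perm.sign πQ : ℤ) : R) * (((Equiv.Perm.sign πP : ℤ) : R) * A.det) := by
    rw [h1, Matrix.det_submatrix_equiv_self, h2, Matrix.det_permute, Matrix.det_permute']
  -- signs
  have hsP := sign_shufflePerm hsn P hP
  have hsQ := sign_shufflePerm hsn Q hQ
  rw [← hπP] at hsP
  rw [← hπQ] at hsQ
  have hεP : ((Equiv.Perm.sign πP : ℤ) : R)
      = (-1 : R) ^ ((∑ i ∈ P, (i : ℕ)) + ∑ i : Fin s, (i : ℕ)) := by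
    rw [hsP]; push_cast; ring
  have hεQ : ((Equiv.Perm.sign πQ : ℤ) : R)
      = (-1 : R) ^ ((∑ i ∈ Q, (i : ℕ)) + ∑ i : Fin s, (i : ℕ)) := by
    rw [hsQ]; push_cast; ring
  have hεε : ((Equiv.Perm.sign πQ : ℤ) : R) * ((Equiv.Perm.sign πP : ℤ) : R)
      = (-1 : R) ^ ((∑ i ∈ P, (i : ℕ)) + ∑ i ∈ Q, (i : ℕ)) := by
    rw [hεP, hεQ, ← pow_add]
    have : (∑ i ∈ Q, (i : ℕ)) + ∑ i : Fin s, (i : ℕ)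
        + ((∑ i ∈ P, (i : ℕ)) + ∑ i : Fin s, (i : ℕ))
        = ((∑ i ∈ P, (i : ℕ)) + ∑ i ∈ Q, (i : ℕ)) + 2 * ∑ i : Fin s, (i : ℕ) := by ring
    rw [this, pow_add, pow_mul, neg_one_sq, one_pow, mul_one]
  -- A' is invertible
  have hεunit : ∀ π : Equiv.Perm (Fin n), IsUnit ((Equiv.Perm.sign π : ℤ) : R) := by
    intro π
    rcases Int.units_eq_one_or (Equiv.Perm.sign π) with h | h <;> rw [h]
    · simp
    · simpa using isUnit_one.neg
  have hA'unit : IsUnit A'.det := by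
    rw [hdetA']
    exact ((hεunit πQ).mul ((hεunit πP).mul hA))
  -- the block identity
  have hcore := jacobi_block_aux A' hA'unit
  have hinv : A'⁻¹ = (A⁻¹).submatrix ⇑pP ⇑qQ := by
    rw [hA'def]
    exact Matrix.inv_submatrix_equiv A qQ pP
  have hblk11 : (A'⁻¹).toBlocks₁₁
      = (A⁻¹).submatrix (⇑(P.orderEmbOfFin hP)) (⇑(Q.orderEmbOfFin hQ)) := by
    rw [hinv]
    ext i j
    simp [Matrix.toBlocks₁₁, hpP, hqQ]
  have hblk22 : A'.toBlocks₂₂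
      = A.submatrix
          (⇑(Qᶜ.orderEmbOfFin (by simp [Finset.card_compl, hQ] : Qᶜ.card = n - s)))
          (⇑(Pᶜ.orderEmbOfFin (by simp [Finset.card_compl, hP] : Pᶜ.card = n - s))) := by
    rw [hA'def]
    ext i j
    simp [Matrix.toBlocks₂₂, hpP, hqQ]
  rw [hblk11, hblk22, hdetA'] at hcore
  set X := ((A⁻¹).submatrix (⇑(P.orderEmbOfFin hP)) (⇑(Q.orderEmbOfFin hQ))).det
  set D := (A.submatrix
      (⇑(Qᶜ.orderEmbOfFin (by simp [Finset.card_compl, hQ] : Qᶜ.card = n - s)))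
      (⇑(Pᶜ.orderEmbOfFin (by simp [Finset.card_compl, hP] : Pᶜ.card = n - s)))).det with hD
  set ε : R := (-1 : R) ^ ((∑ i ∈ P, (i : ℕ)) + ∑ i ∈ Q, (i : ℕ)) with hε
  have hcore' : ε * (A.det * X) = D := by
    rw [← hcore, ← hεε]; ring
  have hεsq : ε * ε = 1 := by
    rw [hε, ← pow_add]
    exact Even.neg_one_pow ⟨_, rfl⟩
  calc A.det * X = (ε * ε) * (A.det * X) := by rw [hεsq, one_mul]
    _ = ε * (ε * (A.det * X)) := by ring
    _ = ε * D := by rw [hcore']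
end

section
/- Let K be a field, let A be an n×n matrix over K, and let 1 ≤ s ≤ n. If the rank of A is at most n − s, then A * D_s(A) = 0; that is, every column of the reduced order-one complement of order s of A lies in the kernel of A. -/
open Matrix Polynomial

namespace Matrix

theorem exists_rank_factorization {K : Type*} [Field K] {m n : Type*} [Fintype m] [Fintype n]
    (A : Matrix m n K) :
    ∃ (C : Matrix m (Fin A.rank) K) (B : Matrix (Fin A.rank) n K), C * B = A := by
  let b := Module.finBasisOfFinrankEq K _ A.rank_eq_finrank_span_cols.symm
  have hcol (j : n) : A.col j ∈ Submodule.span K (Set.range A.col) :=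
    Submodule.subset_span ⟨j, rfl⟩
  refine ⟨of fun i k => (b k : m → K) i, of fun k j => b.repr ⟨A.col j, hcol j⟩ k, ?_⟩
  ext i j
  have hsum : ∑ k, b.repr ⟨A.col j, hcol j⟩ k • (b k : m → K) = A.col j := by
    have := congrArg Subtype.val (b.sum_repr ⟨A.col j, hcol j⟩)
    simpa only [Submodule.coe_sum, Submodule.coe_smul] using this
  simpa [mul_apply, mul_comm] using congrFun hsum i

variable {R : Type*} [CommRing R] {ι κ : Type*} [Fintype ι] [DecidableEq ι]

theorem det_add_smul_single (M : Matrix ι ι R) (i j : ι) (c : R) :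
    det (M + c • single j i 1) = det M + c * adjugate M i j := by
  have : M + c • single j i 1 = updateRow M j (M j + c • Pi.single i 1) := by
    ext a b
    rcases eq_or_ne a j with rfl | ha <;> rcases eq_or_ne b i with rfl | hb <;>
      simp_all [updateRow_apply, eq_comm]
  rw [this, det_updateRow_add, det_updateRow_smul, updateRow_eq_self, adjugate_apply]

variable [Fintype κ] [DecidableEq κ]

theorem natDegree_det_one_add_X_smul_mul_le (C : Matrix ι κ R) (B : Matrix κ ι R) :
    (det (1 + (X : R[X]) • (C * B).map Polynomial.C)).natDegree ≤ Fintype.card κ := by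
  have : det (1 + (X : R[X]) • (C * B).map Polynomial.C)
      = det ((X : R[X]) • (B * C).map Polynomial.C + (1 : Matrix κ κ R).map Polynomial.C) := by
    rw [Matrix.map_mul, ← smul_mul, det_one_add_mul_comm, Matrix.mul_smul, ← Matrix.map_mul,
      Matrix.map_one _ C_0 C_1, add_comm]
  exact this ▸ natDegree_det_X_add_C_le _ _

theorem natDegree_adjugate_one_add_X_smul_mul_le (C : Matrix ι κ R) (B : Matrix κ ι R)
    (i j : ι) :
    (adjugate (1 + (X : R[X]) • (C * B).map Polynomial.C) i j).natDegree ≤ Fintype.card κ := by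
  nontriviality R
  set u : Matrix ι ι R[X] := 1 + (X : R[X]) • (C * B).map Polynomial.C
  by_cases h0 : adjugate u i j = 0
  · simp [h0]
  have hfac : fromCols C (single j () 1) * fromRows B (single () i 1) = C * B + single j i 1 := by
    rw [fromCols_mul_fromRows, single_mul_single_same, one_mul]
  have hdet : det (1 + (X : R[X]) • (C * B + single j i 1).map Polynomial.C)
      = det u + X * adjugate u i j := by
    rw [Matrix.map_add _ (map_add _), smul_add, ← add_assoc, map_single, map_one,
      det_add_smul_single]
  have hle := natDegree_det_one_add_X_smul_mul_le (fromCols C (single j () 1))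
    (fromRows B (single () i 1))
  rw [hfac, hdet, Fintype.card_sum, Fintype.card_unit] at hle
  have hX : (X * adjugate u i j).natDegree ≤ Fintype.card κ + 1 := by
    rw [← add_sub_cancel_left (det u) (X * adjugate u i j)]
    exact (natDegree_sub_le _ _).trans
      (max_le hle ((natDegree_det_one_add_X_smul_mul_le C B).trans (Nat.le_succ _)))
  rw [natDegree_X_mul h0] at hX
  omega

theorem mul_map_coeff_adjugate_one_add_X_smul_eq_zero (C : Matrix ι κ R) (B : Matrix κ ι R)
    {m : ℕ} (hm : Fintype.card κ ≤ m) :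
    C * B * (adjugate (1 + (X : R[X]) • (C * B).map Polynomial.C)).map (fun p => p.coeff m) =
      0 := by
  set u : Matrix ι ι R[X] := 1 + (X : R[X]) • (C * B).map Polynomial.C
  have hexpand :
      u * adjugate u = adjugate u + (X : R[X]) • ((C * B).map Polynomial.C * adjugate u) := by
    rw [add_mul, one_mul, smul_mul]
  ext i j
  have h := congrArg (fun M : Matrix ι ι R[X] => (M i j).coeff (m + 1))
    (hexpand.symm.trans (mul_adjugate u))
  simp only [add_apply, smul_apply, smul_eq_mul, coeff_add, coeff_X_mul, mul_apply,
    finsetSum_coeff, map_apply, coeff_C_mul] at h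
  have hadj : (adjugate u i j).coeff (m + 1) = 0 :=
    coeff_eq_zero_of_natDegree_lt ((natDegree_adjugate_one_add_X_smul_mul_le C B i j).trans_lt
      (by omega))
  have hdet : (det u * (1 : Matrix ι ι R[X]) i j).coeff (m + 1) = 0 := by
    rw [one_apply]
    split_ifs
    · rw [mul_one]
      exact coeff_eq_zero_of_natDegree_lt ((natDegree_det_one_add_X_smul_mul_le C B).trans_lt
        (by omega))
    · rw [mul_zero, coeff_zero]
  rw [hadj, zero_add, hdet] at h
  simpa [mul_apply] using h

end Matrix

theorem mul_redComp_eq_zero_of_rank_le_general {K : Type*} [Field K] {n : ℕ}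
    (A : Matrix (Fin n) (Fin n) K) (s : ℕ)
    (hrank : A.rank ≤ n - s) :
    A * redComp s A = 0 := by
  obtain ⟨C, B, hCB⟩ := A.exists_rank_factorization
  rw [← hCB]
  exact mul_map_coeff_adjugate_one_add_X_smul_eq_zero C B (by simpa using hrank)

/-- For an `n×n` matrix `A` over a field `K` with `1 ≤ s ≤ n`, if the rank of `A`
is at most `n − s` then `A * D_s(A) = 0`: every column of the reduced order-one
complement of order `s` of `A` lies in the kernel of `A`. -/
theorem mul_redComp_eq_zero_of_rank_le {K : Type*} [Field K] {n : ℕ}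
    (A : Matrix (Fin n) (Fin n) K) (s : ℕ) (hs1 : 1 ≤ s) (hsn : s ≤ n)
    (hrank : A.rank ≤ n - s) :
    A * redComp s A = 0 :=
  mul_redComp_eq_zero_of_rank_le_general A s hrank
end
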